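/- arXiv:math/0203011 — 3 statements merged into one kernel-verified Lean document; each statement's English description precedes it below -/
import Mathlib

section
/- Let f ∈ ℤ^{m|n}_+ with r = #f, let θ = (θ_1,...,θ_r) ∈ ℕ^r, and set φ = (θ_r,...,θ_1). Then (−f)·w_0 is dominant with #((−f)·w_0) = r, and R_θ((−f)·w_0) = (−L_φ(f))·w_0 and R'_θ((−f)·w_0) = (−L'_φ(f))·w_0, where −f denotes the pointwise negation of f. -/
open Finset

noncomputable def IdxSet (m n : ℕ) : Finset ℤ := Finset.Icc (-(m:ℤ)) (-1) ∪ Finset.Icc 1 (n:ℤ)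

abbrev Idx (m n : ℕ) := {i : ℤ // i ∈ IdxSet m n}

abbrev Zmn (m n : ℕ) := Idx m n → ℤ

def isgn {m n : ℕ} (i : Idx m n) : ℤ := if 0 < (i:ℤ) then 1 else -1

noncomputable def wtF {m n : ℕ} (f : Zmn m n) : ℤ →₀ ℤ :=
  ∑ i : Idx m n, isgn i • Finsupp.single (f i) (1:ℤ)

noncomputable def wtFrom {m n : ℕ} (f : Zmn m n) (j : Idx m n) : ℤ →₀ ℤ :=
  ∑ i : Idx m n, if (j:ℤ) ≤ (i:ℤ) then isgn i • Finsupp.single (f i) (1:ℤ) else 0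

def domLE (μ ν : ℤ →₀ ℤ) : Prop :=
  ∃ c : ℤ →₀ ℕ,
    ν - μ = c.sum fun a k => (k:ℤ) • (Finsupp.single a (1:ℤ) - Finsupp.single (a+1) (1:ℤ))

def bruhatLE {m n : ℕ} (g f : Zmn m n) : Prop :=
  wtF g = wtF f ∧ ∀ j : Idx m n, domLE (wtFrom g j) (wtFrom f j)

noncomputable def atyp {m n : ℕ} (f : Zmn m n) : ℕ :=
  (m + n - ∑ a ∈ (wtF f).support, (wtF f a).natAbs) / 2

def typicalZ {m n : ℕ} (f : Zmn m n) : Prop := atyp f = 0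

def antidominantZ {m n : ℕ} (f : Zmn m n) : Prop :=
  ∀ i j : Idx m n, (i:ℤ) ≤ (j:ℤ) →
    ((j:ℤ) < 0 → f j ≤ f i) ∧ (0 < (i:ℤ) → f i ≤ f j)

def dominantZ {m n : ℕ} (f : Zmn m n) : Prop :=
  ∀ i j : Idx m n, (i:ℤ) < (j:ℤ) →
    ((j:ℤ) < 0 → f i < f j) ∧ (0 < (i:ℤ) → f j < f i)

def dvec {m n : ℕ} (i : Idx m n) : Zmn m n := fun j => if j = i then isgn i else 0

def pairFamily {m n : ℕ} (f : Zmn m n) (r : ℕ) (I J : Fin r → Idx m n) : Prop :=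
  StrictMono (fun s => ((I s : ℤ))) ∧ StrictAnti (fun s => ((J s : ℤ))) ∧
  (∀ s, (I s : ℤ) < 0) ∧ (∀ s, 0 < (J s : ℤ)) ∧ ∀ s, f (I s) = f (J s)

def blockPerm {m n : ℕ} (e : Equiv.Perm (Idx m n)) : Prop :=
  ∀ i : Idx m n, 0 < (i:ℤ) ↔ 0 < ((e i : ℤ))

def conjDom {m n : ℕ} (f : Zmn m n) : Prop :=
  ∃ e : Equiv.Perm (Idx m n), blockPerm e ∧ dominantZ fun i => f (e i)

open Classical in
noncomputable def domConj {m n : ℕ} (f : Zmn m n) : Zmn m n :=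
  if h : conjDom f then fun i => f (h.choose i) else f

open Classical in
noncomputable def Lop (m n : ℕ) (i j : Idx m n) (f : Zmn m n) : Zmn m n :=
  f - (sInf {a : ℕ | 0 < a ∧ conjDom (f - a • (dvec i - dvec j)) ∧
      ∀ k l : Idx m n, (i:ℤ) < (k:ℤ) → (k:ℤ) < 0 → 0 < (l:ℤ) → (l:ℤ) < (j:ℤ) →
        f k = f l → conjDom (Lop m n k l f - a • (dvec i - dvec j))}) •
    (dvec i - dvec j)
termination_by ((j:ℤ) - (i:ℤ)).toNat
decreasing_by
  simp_wf
  refine ⟨by omega, ?_⟩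
  exact Subtype.coe_lt_coe.mp (by omega)

open Classical in
noncomputable def Rop (m n : ℕ) (i j : Idx m n) (f : Zmn m n) : Zmn m n :=
  f + (sInf {b : ℕ | 0 < b ∧ conjDom (f + b • (dvec i - dvec j)) ∧
      ∀ k l : Idx m n, (k:ℤ) < (i:ℤ) → (j:ℤ) < (l:ℤ) →
        f k = f l → conjDom (Rop m n k l f + b • (dvec i - dvec j))}) •
    (dvec i - dvec j)
termination_by (((i:ℤ) + (m:ℤ)).toNat + ((n:ℤ) - (j:ℤ)).toNat)
decreasing_by
  simp_wf
  have hk := k.2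
  have hl := l.2
  simp only [IdxSet, Finset.mem_union, Finset.mem_Icc] at hk hl
  omega

def applyFwd {m n r : ℕ} (ops : Fin r → Zmn m n → Zmn m n) (f : Zmn m n) : Zmn m n :=
  (List.finRange r).foldl (fun g s => ops s g) f

def applyBwd {m n r : ℕ} (ops : Fin r → Zmn m n → Zmn m n) (f : Zmn m n) : Zmn m n :=
  (List.finRange r).reverse.foldl (fun g s => ops s g) f

noncomputable def Ltheta {m n r : ℕ} (I J : Fin r → Idx m n) (θ : Fin r → ℕ) (f : Zmn m n) : Zmn m n :=
  domConj (applyFwd (fun s => (Lop m n (I s) (J s))^[θ s]) f)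

noncomputable def Ltheta' {m n r : ℕ} (I J : Fin r → Idx m n) (θ : Fin r → ℕ) (f : Zmn m n) : Zmn m n :=
  domConj (applyBwd (fun s => (Lop m n (I s) (J s))^[θ s]) f)

noncomputable def Rtheta {m n r : ℕ} (I J : Fin r → Idx m n) (θ : Fin r → ℕ) (f : Zmn m n) : Zmn m n :=
  domConj (applyBwd (fun s => (Rop m n (I s) (J s))^[θ s]) f)

noncomputable def Rtheta' {m n r : ℕ} (I J : Fin r → Idx m n) (θ : Fin r → ℕ) (f : Zmn m n) : Zmn m n :=
  domConj (applyFwd (fun s => (Rop m n (I s) (J s))^[θ s]) f)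

def w0idx {m n : ℕ} (i : Idx m n) : Idx m n :=
  if _h : (i:ℤ) < 0 then
    ⟨-(m:ℤ) - 1 - (i:ℤ), by
      have h2 := i.2
      simp only [IdxSet, Finset.mem_union, Finset.mem_Icc] at h2 ⊢
      omega⟩
  else
    ⟨(n:ℤ) + 1 - (i:ℤ), by
      have h2 := i.2
      simp only [IdxSet, Finset.mem_union, Finset.mem_Icc] at h2 ⊢
      omega⟩

def wconj {m n : ℕ} (f : Zmn m n) : Zmn m n := fun i => f (w0idx i)

def sigval {m n : ℕ} (f : Zmn m n) (a : ℤ) (i : Idx m n) : ℤ :=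
  if (0 < (i:ℤ) ∧ f i = a) ∨ ((i:ℤ) < 0 ∧ f i = a + 1) then 1
  else if (0 < (i:ℤ) ∧ f i = a + 1) ∨ ((i:ℤ) < 0 ∧ f i = a) then -1
  else 0

noncomputable def idxList (m n : ℕ) : List (Idx m n) :=
  ((IdxSet m n).sort (· ≤ ·)).attach.map fun x =>
    ⟨x.1, by have := x.2; rwa [Finset.mem_sort] at this⟩

def redStep {m n : ℕ} (f : Zmn m n) (a : ℤ)
    (st : List (Idx m n) × List (Idx m n)) (p : Idx m n) :
    List (Idx m n) × List (Idx m n) :=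
  if sigval f a p = 1 then (st.1, p :: st.2)
  else if sigval f a p = -1 then
    match st.2 with
    | [] => (st.1 ++ [p], [])
    | _ :: t => (st.1, t)
  else st

noncomputable def redState {m n : ℕ} (f : Zmn m n) (a : ℤ) : List (Idx m n) × List (Idx m n) :=
  (idxList m n).foldl (redStep f a) ([], [])

noncomputable def dualRedState {m n : ℕ} (f : Zmn m n) (a : ℤ) : List (Idx m n) × List (Idx m n) :=
  (idxList m n).reverse.foldl (redStep f a) ([], [])

noncomputable def epsN {m n : ℕ} (f : Zmn m n) (a : ℤ) : ℕ := (redState f a).1.length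
noncomputable def phiN {m n : ℕ} (f : Zmn m n) (a : ℤ) : ℕ := (redState f a).2.length
noncomputable def epsStarN {m n : ℕ} (f : Zmn m n) (a : ℤ) : ℕ := (dualRedState f a).1.length
noncomputable def phiStarN {m n : ℕ} (f : Zmn m n) (a : ℤ) : ℕ := (dualRedState f a).2.length

noncomputable def EtilP {m n : ℕ} (f : Zmn m n) (a : ℤ) : Option (Zmn m n) :=
  ((redState f a).1.getLast?).map fun p => f - dvec p
noncomputable def FtilP {m n : ℕ} (f : Zmn m n) (a : ℤ) : Option (Zmn m n) :=
  ((redState f a).2.getLast?).map fun p => f + dvec p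
noncomputable def EtilStar {m n : ℕ} (f : Zmn m n) (a : ℤ) : Option (Zmn m n) :=
  ((dualRedState f a).1.getLast?).map fun p => f - dvec p
noncomputable def FtilStar {m n : ℕ} (f : Zmn m n) (a : ℤ) : Option (Zmn m n) :=
  ((dualRedState f a).2.getLast?).map fun p => f + dvec p

noncomputable def Etil {m n : ℕ} (f : Zmn m n) (a : ℤ) : Option (Zmn m n) :=
  (EtilP (wconj f) a).map wconj
noncomputable def Ftil {m n : ℕ} (f : Zmn m n) (a : ℤ) : Option (Zmn m n) :=
  (FtilP (wconj f) a).map wconj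
noncomputable def epsC {m n : ℕ} (f : Zmn m n) (a : ℤ) : ℕ := epsN (wconj f) a
noncomputable def phiC {m n : ℕ} (f : Zmn m n) (a : ℤ) : ℕ := phiN (wconj f) a


section Aux
variable {m n : ℕ}

lemma mem_IdxSet {i : ℤ} : i ∈ IdxSet m n ↔ (-(m:ℤ) ≤ i ∧ i ≤ -1) ∨ (1 ≤ i ∧ i ≤ n) := by
  simp [IdxSet, Finset.mem_union, Finset.mem_Icc]

lemma idx_bounds (i : Idx m n) : (-(m:ℤ) ≤ (i:ℤ) ∧ (i:ℤ) ≤ -1) ∨ (1 ≤ (i:ℤ) ∧ (i:ℤ) ≤ n) :=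
  mem_IdxSet.mp i.2

lemma idx_ne_zero (i : Idx m n) : (i:ℤ) ≠ 0 := by rcases idx_bounds i with h | h <;> omega

lemma w0idx_coe_neg {i : Idx m n} (h : (i:ℤ) < 0) : ((w0idx i : Idx m n) : ℤ) = -(m:ℤ) - 1 - (i:ℤ) := by
  rw [w0idx, dif_pos h]

lemma w0idx_coe_pos {i : Idx m n} (h : 0 < (i:ℤ)) : ((w0idx i : Idx m n) : ℤ) = (n:ℤ) + 1 - (i:ℤ) := by
  rw [w0idx, dif_neg (by omega)]

lemma w0idx_neg_iff {i : Idx m n} : ((w0idx i : Idx m n) : ℤ) < 0 ↔ (i:ℤ) < 0 := by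
  rcases idx_bounds i with h | h
  · rw [w0idx_coe_neg (by omega)]; omega
  · rw [w0idx_coe_pos (by omega)]; omega

lemma w0idx_pos_iff {i : Idx m n} : 0 < ((w0idx i : Idx m n) : ℤ) ↔ 0 < (i:ℤ) := by
  have h1 := w0idx_neg_iff (i := i)
  have h2 := idx_ne_zero (w0idx i)
  have h3 := idx_ne_zero i
  omega

lemma w0idx_w0idx (i : Idx m n) : w0idx (w0idx i) = i := by
  rcases idx_bounds i with h | h
  · have h1 : (i:ℤ) < 0 := by omega
    have h2 : ((w0idx i : Idx m n) : ℤ) < 0 := w0idx_neg_iff.mpr h1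
    apply Subtype.ext
    rw [w0idx_coe_neg h2, w0idx_coe_neg h1]; ring
  · have h1 : 0 < (i:ℤ) := by omega
    have h2 : 0 < ((w0idx i : Idx m n) : ℤ) := w0idx_pos_iff.mpr h1
    apply Subtype.ext
    rw [w0idx_coe_pos h2, w0idx_coe_pos h1]; ring

lemma isgn_w0idx (i : Idx m n) : isgn (w0idx i) = isgn i := by
  unfold isgn
  by_cases h : 0 < (i:ℤ)
  · rw [if_pos (w0idx_pos_iff.mpr h), if_pos h]
  · rw [if_neg (by rw [w0idx_pos_iff]; exact h), if_neg h]

/-- w0 as a permutation. -/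
def w0E (m n : ℕ) : Equiv.Perm (Idx m n) := ⟨w0idx, w0idx, w0idx_w0idx, w0idx_w0idx⟩

lemma w0idx_inj {i j : Idx m n} (h : w0idx i = w0idx j) : i = j := by
  have := congrArg w0idx h; rwa [w0idx_w0idx, w0idx_w0idx] at this

/-- Negated, w0-conjugated function. -/
def NN {m n : ℕ} (f : Zmn m n) : Zmn m n := wconj (-f)

lemma NN_apply (f : Zmn m n) (i : Idx m n) : NN f i = -(f (w0idx i)) := rfl

lemma NN_NN (f : Zmn m n) : NN (NN f) = f := by
  funext i; simp [NN_apply, w0idx_w0idx]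

lemma w0idx_lt_w0idx {i j : Idx m n} (hs : ((i:ℤ) < 0 ∧ (j:ℤ) < 0) ∨ (0 < (i:ℤ) ∧ 0 < (j:ℤ))) :
    ((w0idx i : Idx m n) : ℤ) < ((w0idx j : Idx m n) : ℤ) ↔ (j:ℤ) < (i:ℤ) := by
  rcases hs with ⟨h1, h2⟩ | ⟨h1, h2⟩
  · rw [w0idx_coe_neg h1, w0idx_coe_neg h2]; omega
  · rw [w0idx_coe_pos h1, w0idx_coe_pos h2]; omega

lemma dominantZ_NN {f : Zmn m n} (hf : dominantZ f) : dominantZ (NN f) := by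
  intro i j hij
  constructor
  · intro hj
    have hi : (i:ℤ) < 0 := by omega
    have h := (hf (w0idx j) (w0idx i) (by rw [w0idx_lt_w0idx (Or.inl ⟨hj, hi⟩)]; exact hij)).1
      (w0idx_neg_iff.mpr hi)
    simp only [NN_apply]; omega
  · intro hi
    have hj : 0 < (j:ℤ) := by omega
    have h := (hf (w0idx j) (w0idx i) (by rw [w0idx_lt_w0idx (Or.inr ⟨hj, hi⟩)]; exact hij)).2
      (w0idx_pos_iff.mpr hj)
    simp only [NN_apply]; omega

end Aux
section Aux2
variable {m n : ℕ}

lemma dvec_w0idx (i k : Idx m n) : dvec (w0idx i) (w0idx k) = dvec i k := by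
  unfold dvec
  by_cases h : k = i
  · rw [if_pos (by rw [h]), if_pos h, isgn_w0idx]
  · rw [if_neg (fun hc => h (w0idx_inj hc)), if_neg h]

lemma NN_sub_smul (f : Zmn m n) (c : ℕ) (i j : Idx m n) :
    NN (f - c • (dvec (w0idx i) - dvec (w0idx j))) = NN f + c • (dvec i - dvec j) := by
  funext k
  simp only [NN_apply, Pi.add_apply, Pi.sub_apply, Pi.smul_apply]
  rw [← dvec_w0idx i k, ← dvec_w0idx j k]
  ring

lemma NN_add_smul (f : Zmn m n) (c : ℕ) (i j : Idx m n) :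
    NN (f + c • (dvec (w0idx i) - dvec (w0idx j))) = NN f - c • (dvec i - dvec j) := by
  funext k
  simp only [NN_apply, Pi.add_apply, Pi.sub_apply, Pi.smul_apply]
  rw [← dvec_w0idx i k, ← dvec_w0idx j k]
  ring

lemma blockPerm_comp {e₁ e₂ : Equiv.Perm (Idx m n)} (h₁ : blockPerm e₁) (h₂ : blockPerm e₂) :
    blockPerm (e₁.trans e₂) := fun i => (h₁ i).trans (h₂ (e₁ i))

lemma blockPerm_w0E : blockPerm (w0E m n) := fun i => w0idx_pos_iff.symm

lemma conjDom_NN {f : Zmn m n} (hf : conjDom f) : conjDom (NN f) := by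
  obtain ⟨e, he, hd⟩ := hf
  refine ⟨(w0E m n).trans (e.trans (w0E m n)), blockPerm_comp blockPerm_w0E (blockPerm_comp he blockPerm_w0E), ?_⟩
  have : (fun i => NN f ((((w0E m n).trans (e.trans (w0E m n)))) i)) = NN (fun i => f (e i)) := by
    funext i
    simp only [NN_apply, Equiv.trans_apply, w0E, Equiv.coe_fn_mk, w0idx_w0idx]
  rw [this]
  exact dominantZ_NN hd

lemma conjDom_NN_iff {f : Zmn m n} : conjDom (NN f) ↔ conjDom f :=
  ⟨fun h => by have := conjDom_NN h; rwa [NN_NN] at this, conjDom_NN⟩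

end Aux2
section Aux3
variable {m n : ℕ}

lemma Rop_NN_aux (N : ℕ) : ∀ (i j : Idx m n), (((i:ℤ)+(m:ℤ)).toNat + ((n:ℤ)-(j:ℤ)).toNat ≤ N) →
    (i:ℤ) < 0 → 0 < (j:ℤ) → ∀ f : Zmn m n,
    Rop m n i j (NN f) = NN (Lop m n (w0idx i) (w0idx j) f) := by
  induction N using Nat.strong_induction_on with
  | _ N IH =>
    intro i j hN hi hj f
    have hbi := idx_bounds i
    have hbj := idx_bounds j
    have hi' : ((w0idx i : Idx m n) : ℤ) < 0 := w0idx_neg_iff.mpr hi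
    have hj' : 0 < ((w0idx j : Idx m n) : ℤ) := w0idx_pos_iff.mpr hj
    have hkey : {b : ℕ | 0 < b ∧ conjDom (NN f + b • (dvec i - dvec j)) ∧
        ∀ k l : Idx m n, (k:ℤ) < (i:ℤ) → (j:ℤ) < (l:ℤ) →
          NN f k = NN f l → conjDom (Rop m n k l (NN f) + b • (dvec i - dvec j))}
      = {a : ℕ | 0 < a ∧ conjDom (f - a • (dvec (w0idx i) - dvec (w0idx j))) ∧
        ∀ k l : Idx m n, ((w0idx i : Idx m n):ℤ) < (k:ℤ) → (k:ℤ) < 0 → 0 < (l:ℤ) →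
          (l:ℤ) < ((w0idx j : Idx m n):ℤ) →
          f k = f l → conjDom (Lop m n k l f - a • (dvec (w0idx i) - dvec (w0idx j)))} := by
      ext b
      simp only [Set.mem_setOf_eq]
      constructor
      · rintro ⟨hb, hc, hq⟩
        refine ⟨hb, ?_, ?_⟩
        · rw [← conjDom_NN_iff, NN_sub_smul]; exact hc
        · intro k l hk1 hk2 hl1 hl2 hkl
          have hbk := idx_bounds k
          have hbl := idx_bounds l
          -- translate to (w0idx k, w0idx l)
          have hk0 : ((w0idx k : Idx m n):ℤ) < (i:ℤ) := by
            rw [w0idx_coe_neg hk2, w0idx_coe_neg hi] at *; omega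
          have hl0 : (j:ℤ) < ((w0idx l : Idx m n):ℤ) := by
            rw [w0idx_coe_pos hl1, w0idx_coe_pos hj] at *; omega
          have hval : NN f (w0idx k) = NN f (w0idx l) := by
            simp only [NN_apply, w0idx_w0idx, hkl]
          have hcd := hq (w0idx k) (w0idx l) hk0 hl0 hval
          have hk0n : ((w0idx k : Idx m n):ℤ) < 0 := w0idx_neg_iff.mpr hk2
          have hl0p : 0 < ((w0idx l : Idx m n):ℤ) := w0idx_pos_iff.mpr hl1
          have hmeas : (((w0idx k : Idx m n):ℤ)+(m:ℤ)).toNat + ((n:ℤ)-((w0idx l : Idx m n):ℤ)).toNat < N := by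
            have hbk0 := idx_bounds (w0idx k)
            have hbl0 := idx_bounds (w0idx l)
            omega
          rw [IH _ hmeas (w0idx k) (w0idx l) le_rfl hk0n hl0p f, w0idx_w0idx, w0idx_w0idx] at hcd
          rw [← conjDom_NN_iff, NN_sub_smul]
          exact hcd
      · rintro ⟨hb, hc, hq⟩
        refine ⟨hb, ?_, ?_⟩
        · rw [← NN_sub_smul f b i j]; exact conjDom_NN hc
        · intro k l hk hl hkl
          have hkn : (k:ℤ) < 0 := by omega
          have hlp : 0 < (l:ℤ) := by omega
          have hbk := idx_bounds k
          have hbl := idx_bounds l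
          have hk1 : ((w0idx i : Idx m n):ℤ) < ((w0idx k : Idx m n):ℤ) := by
            rw [w0idx_coe_neg hkn, w0idx_coe_neg hi]; omega
          have hl1 : ((w0idx l : Idx m n):ℤ) < ((w0idx j : Idx m n):ℤ) := by
            rw [w0idx_coe_pos hlp, w0idx_coe_pos hj]; omega
          have hval : f (w0idx k) = f (w0idx l) := by
            simp only [NN_apply] at hkl; omega
          have hcd := hq (w0idx k) (w0idx l) hk1 (w0idx_neg_iff.mpr hkn) (w0idx_pos_iff.mpr hlp) hl1 hval
          have hmeas : (((k:Idx m n):ℤ)+(m:ℤ)).toNat + ((n:ℤ)-((l:Idx m n):ℤ)).toNat < N := by omega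
          rw [IH _ hmeas k l le_rfl hkn hlp f,
            ← NN_sub_smul (Lop m n (w0idx k) (w0idx l) f) b i j]
          exact conjDom_NN hcd
    rw [Rop, Lop, NN_sub_smul, hkey]

lemma Rop_NN (i j : Idx m n) (hi : (i:ℤ) < 0) (hj : 0 < (j:ℤ)) (f : Zmn m n) :
    Rop m n i j (NN f) = NN (Lop m n (w0idx i) (w0idx j) f) :=
  Rop_NN_aux _ i j le_rfl hi hj f

lemma Rop_iter_NN (i j : Idx m n) (hi : (i:ℤ) < 0) (hj : 0 < (j:ℤ)) (t : ℕ) (f : Zmn m n) :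
    (Rop m n i j)^[t] (NN f) = NN ((Lop m n (w0idx i) (w0idx j))^[t] f) := by
  induction t generalizing f with
  | zero => rfl
  | succ t ih =>
    rw [Function.iterate_succ_apply, Function.iterate_succ_apply, Rop_NN i j hi hj, ih]

end Aux3
section Aux4
variable {m n : ℕ}

lemma perm_strictMono_eq {α : Type*} [Fintype α] [LinearOrder α] (e : Equiv.Perm α)
    (h : StrictMono (e : α → α)) (x : α) : e x = x := by
  have hsymm : StrictMono (e.symm : α → α) := by
    intro a b hab
    rcases lt_trichotomy (e.symm a) (e.symm b) with hc | hc | hc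
    · exact hc
    · exact absurd (by rw [← e.apply_symm_apply a, ← e.apply_symm_apply b, hc]) hab.ne
    · exact absurd (by calc b = e (e.symm b) := (e.apply_symm_apply b).symm
            _ < e (e.symm a) := h hc
            _ = a := e.apply_symm_apply a) (not_lt.mpr hab.le)
  have h1 : x ≤ e x := h.le_apply
  have h2 : x ≤ e.symm x := hsymm.le_apply
  have h3 : e x ≤ e (e.symm x) := h.monotone h2
  rw [e.apply_symm_apply] at h3
  exact le_antisymm h3 h1

lemma idx_lt_iff {i j : Idx m n} : i < j ↔ (i:ℤ) < (j:ℤ) := Iff.rfl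

lemma blockPerm_neg {e : Equiv.Perm (Idx m n)} (he : blockPerm e) (i : Idx m n) :
    (i:ℤ) < 0 ↔ ((e i : Idx m n):ℤ) < 0 := by
  have h1 := he i
  have h2 := idx_ne_zero i
  have h3 := idx_ne_zero (e i)
  omega

lemma dom_conj_eq_self {g : Zmn m n} {e : Equiv.Perm (Idx m n)} (he : blockPerm e)
    (h1 : dominantZ g) (h2 : dominantZ (fun i => g (e i))) : ∀ i, g (e i) = g i := by
  have hmono : StrictMono (e : Idx m n → Idx m n) := by
    intro a b hab
    have hab' : (a:ℤ) < (b:ℤ) := hab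
    rw [idx_lt_iff]
    by_cases hb : (b:ℤ) < 0
    · have ha : (a:ℤ) < 0 := by omega
      have hv : g (e a) < g (e b) := (h2 a b hab').1 hb
      have hea : ((e a : Idx m n):ℤ) < 0 := (blockPerm_neg he a).mp ha
      have heb : ((e b : Idx m n):ℤ) < 0 := (blockPerm_neg he b).mp hb
      rcases lt_trichotomy ((e a : Idx m n):ℤ) ((e b : Idx m n):ℤ) with hc | hc | hc
      · exact hc
      · exact absurd (congrArg g (Subtype.ext hc)) hv.ne
      · exact absurd ((h1 (e b) (e a) hc).1 hea) (by omega)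
    · by_cases ha : 0 < (a:ℤ)
      · have hb' : 0 < (b:ℤ) := by omega
        have hv : g (e b) < g (e a) := (h2 a b hab').2 ha
        have hea : 0 < ((e a : Idx m n):ℤ) := (he a).mp ha
        have heb : 0 < ((e b : Idx m n):ℤ) := (he b).mp hb'
        rcases lt_trichotomy ((e a : Idx m n):ℤ) ((e b : Idx m n):ℤ) with hc | hc | hc
        · exact hc
        · exact absurd (congrArg g (Subtype.ext hc)) hv.ne'
        · exact absurd ((h1 (e b) (e a) hc).2 heb) (by omega)
      · -- a negative, b positive
        have ha' : (a:ℤ) < 0 := by have := idx_ne_zero a; omega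
        have hb' : 0 < (b:ℤ) := by have := idx_ne_zero b; omega
        have hea : ((e a : Idx m n):ℤ) < 0 := (blockPerm_neg he a).mp ha'
        have heb : 0 < ((e b : Idx m n):ℤ) := (he b).mp hb'
        omega
  intro i
  rw [perm_strictMono_eq e hmono i]

lemma dom_conj_unique {g : Zmn m n} {e₁ e₂ : Equiv.Perm (Idx m n)}
    (he₁ : blockPerm e₁) (he₂ : blockPerm e₂)
    (h1 : dominantZ (fun i => g (e₁ i))) (h2 : dominantZ (fun i => g (e₂ i))) :
    (fun i => g (e₁ i)) = fun i => g (e₂ i) := by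
  have hbp : blockPerm (e₂.trans e₁.symm) := by
    intro i
    have h3 := he₂ i
    have h4 := he₁ (e₁.symm (e₂ i))
    simp only [Equiv.trans_apply]
    rw [e₁.apply_symm_apply] at h4
    exact h3.trans h4.symm
  have := dom_conj_eq_self (g := fun i => g (e₁ i)) hbp h1 ?_
  · funext i
    have h5 := this i
    simp only [Equiv.trans_apply, e₁.apply_symm_apply] at h5
    exact h5.symm
  · have : (fun i => (fun j => g (e₁ j)) ((e₂.trans e₁.symm) i)) = fun i => g (e₂ i) := by
      funext i; simp only [Equiv.trans_apply, e₁.apply_symm_apply]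
    rw [this]; exact h2

open Classical in
lemma domConj_spec {g : Zmn m n} (hg : conjDom g) (e : Equiv.Perm (Idx m n))
    (he : blockPerm e) (hd : dominantZ (fun i => g (e i))) :
    domConj g = fun i => g (e i) := by
  rw [domConj, dif_pos hg]
  exact dom_conj_unique hg.choose_spec.1 he hg.choose_spec.2 hd

lemma domConj_NN (g : Zmn m n) : domConj (NN g) = NN (domConj g) := by
  by_cases hg : conjDom g
  · have hNg : conjDom (NN g) := conjDom_NN hg
    classical
    set e := hg.choose with he_def
    obtain ⟨he, hd⟩ := hg.choose_spec
    have hbp : blockPerm ((w0E m n).trans (e.trans (w0E m n))) :=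
      blockPerm_comp blockPerm_w0E (blockPerm_comp he blockPerm_w0E)
    have hkey : NN (fun i => g (e i)) = fun i => NN g (((w0E m n).trans (e.trans (w0E m n))) i) := by
      funext i
      simp only [NN_apply, Equiv.trans_apply, w0E, Equiv.coe_fn_mk, w0idx_w0idx]
    rw [domConj_spec hNg ((w0E m n).trans (e.trans (w0E m n))) hbp (by rw [← hkey]; exact dominantZ_NN hd),
      domConj_spec hg e he hd, hkey]
  · have hNg : ¬ conjDom (NN g) := fun h => hg (conjDom_NN_iff.mp h)
    have h1 : domConj (NN g) = NN g := by rw [domConj, dif_neg hNg]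
    have h2 : domConj g = g := by rw [domConj, dif_neg hg]
    rw [h1, h2]

end Aux4
section Aux5
variable {m n : ℕ}

/-- positive block -/
noncomputable def posBlk (m n : ℕ) : Finset (Idx m n) := Finset.univ.filter fun i => 0 < (i:ℤ)
/-- negative block -/
noncomputable def negBlk (m n : ℕ) : Finset (Idx m n) := Finset.univ.filter fun i => (i:ℤ) < 0

lemma card_posBlk_add_card_negBlk : (posBlk m n).card + (negBlk m n).card = m + n := by
  have h1 : negBlk m n = Finset.univ.filter fun i : Idx m n => ¬ 0 < (i:ℤ) := by
    apply Finset.filter_congr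
    intro i _
    have := idx_ne_zero i
    simp only [eq_iff_iff, not_lt]
    omega
  rw [h1, posBlk, Finset.card_filter_add_card_filter_not]
  have h2 : (Finset.univ : Finset (Idx m n)).card = (IdxSet m n).card := Fintype.card_coe _
  rw [h2, IdxSet, Finset.card_union_of_disjoint]
  · rw [Int.card_Icc, Int.card_Icc]
    omega
  · rw [Finset.disjoint_left]
    intro a ha hb
    rw [Finset.mem_Icc] at ha hb
    omega

lemma injOn_posBlk {g : Zmn m n} (hg : dominantZ g) : Set.InjOn g (posBlk m n) := by
  intro a ha b hb hab
  simp only [posBlk, Finset.coe_filter, Set.mem_setOf_eq] at ha hb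
  rcases lt_trichotomy (a:ℤ) (b:ℤ) with h | h | h
  · exact absurd ((hg a b h).2 ha.2) (by rw [hab]; exact lt_irrefl _)
  · exact Subtype.ext h
  · exact absurd ((hg b a h).2 hb.2) (by rw [hab]; exact lt_irrefl _)

lemma injOn_negBlk {g : Zmn m n} (hg : dominantZ g) : Set.InjOn g (negBlk m n) := by
  intro a ha b hb hab
  simp only [negBlk, Finset.coe_filter, Set.mem_setOf_eq] at ha hb
  rcases lt_trichotomy (a:ℤ) (b:ℤ) with h | h | h
  · exact absurd ((hg a b h).1 hb.2) (by rw [hab]; exact lt_irrefl _)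
  · exact Subtype.ext h
  · exact absurd ((hg b a h).1 ha.2) (by rw [hab]; exact lt_irrefl _)

lemma sum_indicator_of_injOn {s : Finset (Idx m n)} {g : Zmn m n} (hg : Set.InjOn g s) (a : ℤ) :
    (∑ i ∈ s, if g i = a then (1:ℤ) else 0) = if a ∈ s.image g then 1 else 0 := by
  by_cases ha : a ∈ s.image g
  · obtain ⟨i₀, hi₀, hgi₀⟩ := Finset.mem_image.mp ha
    rw [if_pos ha, Finset.sum_eq_single_of_mem i₀ hi₀]
    · rw [if_pos hgi₀]
    · intro b hb hne
      rw [if_neg (fun hc => hne (hg hb hi₀ (hc.trans hgi₀.symm)))]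
  · rw [if_neg ha, Finset.sum_eq_zero]
    intro i hi
    rw [if_neg (fun hc => ha (Finset.mem_image.mpr ⟨i, hi, hc⟩))]

lemma wtF_apply_dom {g : Zmn m n} (hg : dominantZ g) (a : ℤ) :
    wtF g a = (if a ∈ (posBlk m n).image g then (1:ℤ) else 0)
      - (if a ∈ (negBlk m n).image g then (1:ℤ) else 0) := by
  have h0 : wtF g a = ∑ i : Idx m n, isgn i * (if g i = a then (1:ℤ) else 0) := by
    rw [wtF, Finsupp.finset_sum_apply]
    apply Finset.sum_congr rfl
    intro i _
    rw [Finsupp.smul_apply, Finsupp.single_apply, smul_eq_mul]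
  rw [h0, ← Finset.sum_filter_add_sum_filter_not (Finset.univ : Finset (Idx m n)) (fun i => 0 < (i:ℤ))]
  have hpos : ∀ i ∈ Finset.univ.filter (fun i : Idx m n => 0 < (i:ℤ)),
      isgn i * (if g i = a then (1:ℤ) else 0) = if g i = a then (1:ℤ) else 0 := by
    intro i hi
    rw [Finset.mem_filter] at hi
    rw [isgn, if_pos hi.2, one_mul]
  have hneg : ∀ i ∈ Finset.univ.filter (fun i : Idx m n => ¬ 0 < (i:ℤ)),
      isgn i * (if g i = a then (1:ℤ) else 0) = -(if g i = a then (1:ℤ) else 0) := by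
    intro i hi
    rw [Finset.mem_filter] at hi
    rw [isgn, if_neg hi.2, neg_one_mul]
  rw [Finset.sum_congr rfl hpos, Finset.sum_congr rfl hneg, Finset.sum_neg_distrib]
  have hneg_eq : Finset.univ.filter (fun i : Idx m n => ¬ 0 < (i:ℤ)) = negBlk m n := by
    apply Finset.filter_congr
    intro i _
    have := idx_ne_zero i
    simp only [eq_iff_iff, not_lt]
    omega
  have hpos_eq : (Finset.univ : Finset (Idx m n)).filter (fun i : Idx m n => 0 < (i:ℤ)) = posBlk m n := rfl
  rw [hneg_eq, hpos_eq]
  rw [sum_indicator_of_injOn (injOn_posBlk hg), sum_indicator_of_injOn (injOn_negBlk hg)]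
  ring

lemma atyp_eq_card_inter {g : Zmn m n} (hg : dominantZ g) :
    atyp g = (((posBlk m n).image g) ∩ ((negBlk m n).image g)).card := by
  set P := (posBlk m n).image g
  set Q := (negBlk m n).image g
  have hsupp : (wtF g).support ⊆ P ∪ Q := by
    intro a ha
    rw [Finsupp.mem_support_iff] at ha
    rw [Finset.mem_union]
    by_contra hc
    push_neg at hc
    rw [wtF_apply_dom hg a, if_neg hc.1, if_neg hc.2] at ha
    exact ha (by ring)
  have hsum : ∑ a ∈ (wtF g).support, (wtF g a).natAbs
      = ∑ a ∈ P ∪ Q, (wtF g a).natAbs := by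
    apply Finset.sum_subset hsupp
    intro x _ hx
    rw [Finsupp.notMem_support_iff] at hx
    rw [hx]; rfl
  have hval : ∀ a ∈ P ∪ Q, (wtF g a).natAbs = if a ∈ P ∩ Q then 0 else 1 := by
    intro a ha
    rw [Finset.mem_union] at ha
    rw [wtF_apply_dom hg a]
    by_cases h1 : a ∈ P <;> by_cases h2 : a ∈ Q
    · rw [if_pos h1, if_pos h2, if_pos (Finset.mem_inter.mpr ⟨h1, h2⟩)]; rfl
    · rw [if_pos h1, if_neg h2, if_neg (fun hc => h2 (Finset.mem_inter.mp hc).2)]; rfl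
    · rw [if_neg h1, if_pos h2, if_neg (fun hc => h1 (Finset.mem_inter.mp hc).1)]; rfl
    · rcases ha with h | h
      · exact absurd h h1
      · exact absurd h h2
  have hsum2 : ∑ a ∈ P ∪ Q, (wtF g a).natAbs = (P ∪ Q).card - (P ∩ Q).card := by
    rw [Finset.sum_congr rfl hval, Finset.sum_ite, Finset.sum_const, Finset.sum_const,
      smul_eq_mul, mul_zero, smul_eq_mul, mul_one, zero_add]
    have : (P ∪ Q).filter (fun a => ¬ a ∈ P ∩ Q) = (P ∪ Q) \ (P ∩ Q) := by
      rw [Finset.sdiff_eq_filter]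
    rw [this, Finset.card_sdiff_of_subset (fun a ha => Finset.mem_union_left _ (Finset.mem_inter.mp ha).1)]
  have hinter_le : (P ∩ Q).card ≤ (P ∪ Q).card :=
    Finset.card_le_card (fun a ha => Finset.mem_union_left _ (Finset.mem_inter.mp ha).1)
  have hcards : (P ∪ Q).card + (P ∩ Q).card = P.card + Q.card :=
    Finset.card_union_add_card_inter P Q
  have hP : P.card = (posBlk m n).card := Finset.card_image_of_injOn (injOn_posBlk hg)
  have hQ : Q.card = (negBlk m n).card := Finset.card_image_of_injOn (injOn_negBlk hg)
  have hmn := card_posBlk_add_card_negBlk (m := m) (n := n)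
  have hPQle : (P ∩ Q).card ≤ P.card := Finset.card_le_card Finset.inter_subset_left
  rw [atyp, hsum, hsum2]
  omega

end Aux5
section Aux6
variable {m n : ℕ}

lemma pairFamily_unique {f : Zmn m n} (hf : dominantZ f) {r : ℕ} (hr : r = atyp f)
    {I1 J1 I2 J2 : Fin r → Idx m n} (h1 : pairFamily f r I1 J1) (h2 : pairFamily f r I2 J2) :
    I1 = I2 ∧ J1 = J2 := by
  set A := ((posBlk m n).image f) ∩ ((negBlk m n).image f) with hA
  have hcard : A.card = r := by rw [hr, atyp_eq_card_inter hf]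
  have hmem : ∀ (I J : Fin r → Idx m n), pairFamily f r I J → ∀ s, f (I s) ∈ A := by
    rintro I J ⟨hImono, hJanti, hIneg, hJpos, hval⟩ s
    refine Finset.mem_inter.mpr ⟨?_, ?_⟩
    · exact Finset.mem_image.mpr ⟨J s, Finset.mem_filter.mpr ⟨Finset.mem_univ _, hJpos s⟩, (hval s).symm⟩
    · exact Finset.mem_image.mpr ⟨I s, Finset.mem_filter.mpr ⟨Finset.mem_univ _, hIneg s⟩, rfl⟩
  have hmono : ∀ (I J : Fin r → Idx m n), pairFamily f r I J → StrictMono (fun s => f (I s)) := by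
    rintro I J ⟨hImono, hJanti, hIneg, hJpos, hval⟩ s t hst
    exact (hf (I s) (I t) (hImono hst)).1 (hIneg t)
  have he1 : (fun s => f (I1 s)) = A.orderEmbOfFin hcard :=
    Finset.orderEmbOfFin_unique hcard (hmem I1 J1 h1) (hmono I1 J1 h1)
  have he2 : (fun s => f (I2 s)) = A.orderEmbOfFin hcard :=
    Finset.orderEmbOfFin_unique hcard (hmem I2 J2 h2) (hmono I2 J2 h2)
  have hfI : ∀ s, f (I1 s) = f (I2 s) := by
    intro s
    rw [show f (I1 s) = _ from congrFun he1 s, show f (I2 s) = _ from congrFun he2 s]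
  have hIeq : I1 = I2 := by
    funext s
    exact injOn_negBlk hf (Finset.mem_coe.mpr (Finset.mem_filter.mpr ⟨Finset.mem_univ _, h1.2.2.1 s⟩))
      (Finset.mem_coe.mpr (Finset.mem_filter.mpr ⟨Finset.mem_univ _, h2.2.2.1 s⟩)) (hfI s)
  refine ⟨hIeq, funext fun s => ?_⟩
  have hfJ : f (J1 s) = f (J2 s) := by
    rw [← h1.2.2.2.2 s, ← h2.2.2.2.2 s, hfI s]
  exact injOn_posBlk hf (Finset.mem_coe.mpr (Finset.mem_filter.mpr ⟨Finset.mem_univ _, h1.2.2.2.1 s⟩))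
    (Finset.mem_coe.mpr (Finset.mem_filter.mpr ⟨Finset.mem_univ _, h2.2.2.2.1 s⟩)) hfJ

lemma pairFamily_NN {f : Zmn m n} {r : ℕ} {I J : Fin r → Idx m n}
    (hIJ : pairFamily f r I J) :
    pairFamily (NN f) r (fun s => w0idx (I (Fin.rev s))) (fun s => w0idx (J (Fin.rev s))) := by
  obtain ⟨hImono, hJanti, hIneg, hJpos, hval⟩ := hIJ
  refine ⟨?_, ?_, ?_, ?_, ?_⟩
  · intro s t hst
    have h1 : (I (Fin.rev t) : ℤ) < (I (Fin.rev s) : ℤ) := hImono (Fin.rev_lt_rev.mpr hst)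
    simp only
    rw [w0idx_lt_w0idx (Or.inl ⟨hIneg _, hIneg _⟩)]
    exact h1
  · intro s t hst
    have h1 : (J (Fin.rev s) : ℤ) < (J (Fin.rev t) : ℤ) := hJanti (Fin.rev_lt_rev.mpr hst)
    simp only
    rw [w0idx_lt_w0idx (Or.inr ⟨hJpos _, hJpos _⟩)]
    exact h1
  · intro s; exact w0idx_neg_iff.mpr (hIneg _)
  · intro s; exact w0idx_pos_iff.mpr (hJpos _)
  · intro s
    simp only [NN_apply, w0idx_w0idx, hval]

lemma image_NN_posBlk (f : Zmn m n) :
    (posBlk m n).image (NN f) = ((posBlk m n).image f).image (Neg.neg) := by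
  ext a
  simp only [Finset.mem_image]
  constructor
  · rintro ⟨i, hi, rfl⟩
    refine ⟨f (w0idx i), ⟨w0idx i, ?_, rfl⟩, rfl⟩
    simp only [posBlk, Finset.mem_filter] at hi ⊢
    exact ⟨Finset.mem_univ _, w0idx_pos_iff.mpr hi.2⟩
  · rintro ⟨b, ⟨j, hj, rfl⟩, rfl⟩
    refine ⟨w0idx j, ?_, ?_⟩
    · simp only [posBlk, Finset.mem_filter] at hj ⊢
      exact ⟨Finset.mem_univ _, w0idx_pos_iff.mpr hj.2⟩
    · rw [NN_apply, w0idx_w0idx]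

lemma image_NN_negBlk (f : Zmn m n) :
    (negBlk m n).image (NN f) = ((negBlk m n).image f).image (Neg.neg) := by
  ext a
  simp only [Finset.mem_image]
  constructor
  · rintro ⟨i, hi, rfl⟩
    refine ⟨f (w0idx i), ⟨w0idx i, ?_, rfl⟩, rfl⟩
    simp only [negBlk, Finset.mem_filter] at hi ⊢
    exact ⟨Finset.mem_univ _, w0idx_neg_iff.mpr hi.2⟩
  · rintro ⟨b, ⟨j, hj, rfl⟩, rfl⟩
    refine ⟨w0idx j, ?_, ?_⟩
    · simp only [negBlk, Finset.mem_filter] at hj ⊢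
      exact ⟨Finset.mem_univ _, w0idx_neg_iff.mpr hj.2⟩
    · rw [NN_apply, w0idx_w0idx]

lemma atyp_NN {f : Zmn m n} (hf : dominantZ f) : atyp (NN f) = atyp f := by
  rw [atyp_eq_card_inter (dominantZ_NN hf), atyp_eq_card_inter hf,
    image_NN_posBlk, image_NN_negBlk,
    ← Finset.image_inter _ _ (neg_injective)]
  exact Finset.card_image_of_injective _ neg_injective

end Aux6
section Aux7
variable {m n : ℕ}

lemma foldl_R_NN {r : ℕ} (I J : Fin r → Idx m n) (θ : Fin r → ℕ)
    (hIneg : ∀ s, (I s : ℤ) < 0) (hJpos : ∀ s, 0 < (J s : ℤ)) :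
    ∀ (L : List (Fin r)) (g : Zmn m n),
    L.foldl (fun h s => (Rop m n (w0idx (I (Fin.rev s))) (w0idx (J (Fin.rev s))))^[θ s] h) (NN g)
    = NN (L.foldl (fun h s => (Lop m n (I (Fin.rev s)) (J (Fin.rev s)))^[θ s] h) g) := by
  intro L
  induction L with
  | nil => intro g; rfl
  | cons s L ih =>
    intro g
    simp only [List.foldl_cons]
    rw [Rop_iter_NN _ _ (w0idx_neg_iff.mpr (hIneg _)) (w0idx_pos_iff.mpr (hJpos _)) (θ s) g,
      w0idx_w0idx, w0idx_w0idx, ih]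

lemma finRange_reverse_map_rev (r : ℕ) :
    ((List.finRange r).reverse.map Fin.rev) = List.finRange r := by
  rw [List.finRange_reverse, List.map_map]
  have : (Fin.rev ∘ Fin.rev : Fin r → Fin r) = id := by
    funext s; simp [Function.comp, Fin.rev_rev]
  rw [this, List.map_id]

lemma foldl_reindex {r : ℕ} (F : Fin r → Zmn m n → Zmn m n) (f : Zmn m n) :
    (List.finRange r).foldl (fun h s => F s h) f
      = (List.finRange r).reverse.foldl (fun h s => F (Fin.rev s) h) f := by
  conv_lhs => rw [← finRange_reverse_map_rev r]
  rw [List.foldl_map]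

end Aux7
/-- `R_θ((−f)·w₀) = (−L_φ(f))·w₀` and `R'_θ((−f)·w₀) = (−L'_φ(f))·w₀`
for `φ = (θ_r,...,θ_1)`. -/
theorem R_of_neg_w0 {m n r : ℕ} (f : Zmn m n) (hf : dominantZ f) (hr : r = atyp f)
    (I J : Fin r → Idx m n) (hIJ : pairFamily f r I J)
    (θ φ : Fin r → ℕ) (hφ : ∀ s, φ s = θ (Fin.rev s)) :
    dominantZ (wconj (-f)) ∧ atyp (wconj (-f)) = r ∧
    (∀ I' J' : Fin r → Idx m n, pairFamily (wconj (-f)) r I' J' →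
        Rtheta I' J' θ (wconj (-f)) = wconj (-(Ltheta I J φ f))) ∧
    (∀ I' J' : Fin r → Idx m n, pairFamily (wconj (-f)) r I' J' →
        Rtheta' I' J' θ (wconj (-f)) = wconj (-(Ltheta' I J φ f))) := by
  have hNN : wconj (-f) = NN f := rfl
  have hIneg : ∀ s, (I s : ℤ) < 0 := hIJ.2.2.1
  have hJpos : ∀ s, 0 < (J s : ℤ) := hIJ.2.2.2.1
  have hrNN : r = atyp (NN f) := by rw [atyp_NN hf, hr]
  have hθ : ∀ s : Fin r, θ s = φ (Fin.rev s) := by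
    intro s; rw [hφ, Fin.rev_rev]
  refine ⟨dominantZ_NN hf, by rw [hNN, ← hrNN], ?_, ?_⟩
  · intro I' J' hI'J'
    rw [hNN] at hI'J' ⊢
    obtain ⟨hIeq, hJeq⟩ := pairFamily_unique (dominantZ_NN hf) hrNN hI'J' (pairFamily_NN hIJ)
    rw [hIeq, hJeq]
    simp only [Rtheta, applyBwd]
    rw [foldl_R_NN I J θ hIneg hJpos _ f, domConj_NN]
    rw [show wconj (-(Ltheta I J φ f)) = NN (Ltheta I J φ f) from rfl]
    congr 1
    simp only [Ltheta, applyFwd]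
    congr 1
    rw [foldl_reindex (fun s => (Lop m n (I s) (J s))^[φ s]) f]
    simp only [← hθ]
  · intro I' J' hI'J'
    rw [hNN] at hI'J' ⊢
    obtain ⟨hIeq, hJeq⟩ := pairFamily_unique (dominantZ_NN hf) hrNN hI'J' (pairFamily_NN hIJ)
    rw [hIeq, hJeq]
    simp only [Rtheta', applyFwd]
    rw [foldl_R_NN I J θ hIneg hJpos _ f, domConj_NN]
    rw [show wconj (-(Ltheta' I J φ f)) = NN (Ltheta' I J φ f) from rfl]
    congr 1
    simp only [Ltheta', applyBwd]
    congr 1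
    simp only [hθ]
    rw [foldl_reindex (fun s => (Lop m n (I (Fin.rev s)) (J (Fin.rev s)))^[φ (Fin.rev s)]) f]
    simp only [Fin.rev_rev]
end

section
/- Let λ ∈ X^+(m|n). Let r be maximal such that there exist indices −m ≤ i_1 < ... < i_r < 0 < j_r < ... < j_1 ≤ n with (λ+ρ | δ_{i_s} − δ_{j_s}) = 0 for each s = 1,...,r, and fix such indices. Then there exists a tuple (k_1,...,k_r) of strictly positive integers such that for every θ = (θ_1,...,θ_r) ∈ {0,1}^r, the weight λ + Σ_{s=1}^r θ_s k_s (δ_{i_s} − δ_{j_s}) is conjugate under the dot action of W to a dominant weight. -/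
/-- The integral weight lattice `X(m|n)`, realized via coordinates in the basis `{δ_i}`. -/
abbrev Xwt (m n : ℕ) := Idx m n → ℤ

/-- The bilinear form on `X(m|n)` with `(δ_i|δ_j) = 1` if `i = j > 0`, `−1` if `i = j < 0`. -/
noncomputable def formX {m n : ℕ} (lam mu : Xwt m n) : ℤ :=
  ∑ i : Idx m n, isgn i * lam i * mu i

/-- The weight `ρ = −Σ_i i·δ_i`. -/
def rhoX (m n : ℕ) : Xwt m n := fun i => -(i:ℤ)

/-- The basis weight `δ_i`. -/
def deltaX {m n : ℕ} (i : Idx m n) : Xwt m n := fun k => if k = i then 1 else 0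

/-- Dominant integral weights: `λ_{-m} ≥ ... ≥ λ_{-1}` and `λ_1 ≥ ... ≥ λ_n`. -/
def dominantX {m n : ℕ} (lam : Xwt m n) : Prop :=
  ∀ i j : Idx m n, (i:ℤ) ≤ (j:ℤ) → (((j:ℤ) < 0) ∨ (0 < (i:ℤ))) → lam j ≤ lam i

/-- `λ` is conjugate under the dot action of `W` to a dominant weight
(`(w·λ)(k) = (λ+ρ)(w⁻¹ k) − ρ(k)`). -/
def dotConjDominant {m n : ℕ} (lam : Xwt m n) : Prop :=
  ∃ e : Equiv.Perm (Idx m n), blockPerm e ∧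
    dominantX (fun k => (lam (e.symm k) + rhoX m n (e.symm k)) - rhoX m n k)

/- ======================= auxiliary lemmas ======================= -/

lemma idx_mem {m n : ℕ} (i : Idx m n) :
    (-(m:ℤ) ≤ (i:ℤ) ∧ (i:ℤ) ≤ -1) ∨ (1 ≤ (i:ℤ) ∧ (i:ℤ) ≤ (n:ℤ)) := by
  have := i.2
  simpa only [IdxSet, Finset.mem_union, Finset.mem_Icc] using this

/-- Any injective integer-valued function on a finite linear order can be made
strictly decreasing by composing with a permutation. -/
lemma blockSort {α : Type*} [Fintype α] [LinearOrder α] (f : α → ℤ)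
    (hf : Function.Injective f) :
    ∃ σ : Equiv.Perm α, ∀ x y : α, x < y → f (σ y) < f (σ x) := by
  classical
  let e : Fin (Fintype.card α) ≃o α := monoEquivOfFin α rfl
  let g : Fin (Fintype.card α) → ℤ := fun i => -(f (e i))
  let τ := Tuple.sort g
  have hmono : Monotone (g ∘ τ) := Tuple.monotone_sort g
  have hinj : Function.Injective (g ∘ τ) := by
    intro x y h
    simp only [Function.comp_apply, g] at h
    have h1 : f (e (τ x)) = f (e (τ y)) := by omega
    have h2 : e (τ x) = e (τ y) := hf h1
    have h3 : τ x = τ y := e.injective h2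
    exact τ.injective h3
  have hsm : StrictMono (g ∘ τ) := hmono.strictMono_of_injective hinj
  refine ⟨e.toEquiv.symm.trans (τ.trans e.toEquiv), ?_⟩
  intro x y hxy
  have h0 : e.symm x < e.symm y := e.symm.strictMono hxy
  have := hsm h0
  simp only [Function.comp_apply, g, neg_lt_neg_iff] at this
  simpa [Equiv.trans_apply] using this

/-- On a block consisting of consecutive integers, a strictly decreasing function
drops by at least the distance. -/
lemma gap_le {m n : ℕ} (c : Idx m n → ℤ) (lo hi : ℤ)
    (hsub : ∀ x : ℤ, lo ≤ x → x ≤ hi → x ∈ IdxSet m n)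
    (hdec : ∀ i j : Idx m n, lo ≤ (i:ℤ) → (j:ℤ) ≤ hi → (i:ℤ) < (j:ℤ) → c j < c i)
    (i j : Idx m n) (hlo : lo ≤ (i:ℤ)) (hhi : (j:ℤ) ≤ hi) (hij : (i:ℤ) ≤ (j:ℤ)) :
    c j + (j:ℤ) ≤ c i + (i:ℤ) := by
  have key : ∀ x : ℤ, (i:ℤ) ≤ x →
      ∀ hx : x ∈ IdxSet m n, x ≤ hi → c ⟨x, hx⟩ + x ≤ c i + (i:ℤ) := by
    refine Int.le_induction ?_ ?_
    · intro hx _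
      have h : (⟨(i:ℤ), hx⟩ : Idx m n) = i := Subtype.ext rfl
      rw [h]
    · intro x hx ih hmem hle
      have hxmem : x ∈ IdxSet m n := hsub x (le_trans hlo hx) (by omega)
      have h1 := ih hxmem (by omega)
      have h2 : c ⟨x + 1, hmem⟩ < c ⟨x, hxmem⟩ :=
        hdec _ _ (by simpa using le_trans hlo hx) (by simpa using hle) (by simp)
      linarith
  have h := key (j:ℤ) hij j.2 hhi
  simpa using h

lemma subtypeCongr_pred {ε : Type*} (p : ε → Prop) [DecidablePred p]
    (ep : Equiv.Perm {a // p a}) (en : Equiv.Perm {a // ¬ p a}) (a : ε) :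
    p (ep.subtypeCongr en a) ↔ p a := by
  by_cases h : p a
  · rw [Equiv.Perm.subtypeCongr.left_apply ep en h]
    exact iff_of_true (ep ⟨a, h⟩).2 h
  · rw [Equiv.Perm.subtypeCongr.right_apply ep en h]
    exact iff_of_false (en ⟨a, h⟩).2 h

/-- If `μ + ρ` is injective on each block, then `μ` is dot-conjugate to a dominant weight. -/
lemma conj_of_blockInj {m n : ℕ} (mu : Xwt m n)
    (hneg : ∀ p q : Idx m n, (p:ℤ) < 0 → (q:ℤ) < 0 →
      mu p + rhoX m n p = mu q + rhoX m n q → p = q)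
    (hpos : ∀ p q : Idx m n, 0 < (p:ℤ) → 0 < (q:ℤ) →
      mu p + rhoX m n p = mu q + rhoX m n q → p = q) :
    dotConjDominant mu := by
  set b : Idx m n → ℤ := fun k => mu k + rhoX m n k with hbdef
  have hfP : Function.Injective (fun x : {i : Idx m n // 0 < (i:ℤ)} => b x.1) := by
    intro x y h
    exact Subtype.ext (hpos x.1 y.1 x.2 y.2 h)
  have hfN : Function.Injective (fun x : {i : Idx m n // ¬ 0 < (i:ℤ)} => b x.1) := by
    intro x y h
    refine Subtype.ext (hneg x.1 y.1 ?_ ?_ h)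
    · have hx := x.2; rcases idx_mem x.1 with h' | h' <;> omega
    · have hy := y.2; rcases idx_mem y.1 with h' | h' <;> omega
  obtain ⟨σP, hσP⟩ := blockSort _ hfP
  obtain ⟨σN, hσN⟩ := blockSort _ hfN
  set E := Equiv.Perm.subtypeCongr σP σN with hEdef
  refine ⟨E.symm, ?_, ?_⟩
  · intro i
    have hs : E.symm = Equiv.Perm.subtypeCongr σP.symm σN.symm :=
      Equiv.Perm.subtypeCongr.symm σP σN
    rw [hs]
    exact (subtypeCongr_pred (fun i : Idx m n => 0 < (i:ℤ)) σP.symm σN.symm i).symm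
  · intro i j hij hcase
    simp only [Equiv.symm_symm, rhoX, sub_neg_eq_add]
    rcases hcase with hjneg | hipos
    · have hineg : (i:ℤ) < 0 := by omega
      refine gap_le (fun k => b (E k)) (-(m:ℤ)) (-1) ?_ ?_ i j ?_ (by omega) hij
      · intro x h1 h2
        exact Finset.mem_union_left _ (Finset.mem_Icc.mpr ⟨h1, h2⟩)
      · intro i' j' h1 h2 h3
        have hi' : ¬ 0 < (i':ℤ) := by omega
        have hj' : ¬ 0 < (j':ℤ) := by omega
        show b (E j') < b (E i')
        rw [Equiv.Perm.subtypeCongr.right_apply σP σN hi',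
          Equiv.Perm.subtypeCongr.right_apply σP σN hj']
        exact hσN ⟨i', hi'⟩ ⟨j', hj'⟩ (by simpa [Subtype.mk_lt_mk, ← Subtype.coe_lt_coe] using h3)
      · rcases idx_mem i with h' | h' <;> omega
    · have hjpos : 0 < (j:ℤ) := by omega
      refine gap_le (fun k => b (E k)) 1 (n:ℤ) ?_ ?_ i j (by omega) ?_ hij
      · intro x h1 h2
        exact Finset.mem_union_right _ (Finset.mem_Icc.mpr ⟨h1, h2⟩)
      · intro i' j' h1 h2 h3
        have hi' : 0 < (i':ℤ) := by omega
        have hj' : 0 < (j':ℤ) := by omega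
        show b (E j') < b (E i')
        rw [Equiv.Perm.subtypeCongr.left_apply σP σN hi',
          Equiv.Perm.subtypeCongr.left_apply σP σN hj']
        exact hσP ⟨i', hi'⟩ ⟨j', hj'⟩ (by simpa [Subtype.mk_lt_mk, ← Subtype.coe_lt_coe] using h3)
      · rcases idx_mem j with h' | h' <;> omega

/-- for dominant `λ` and a maximal family of atypical pairs, there is a tuple
`(k_1,...,k_r)` of positive integers such that `λ + Σ_s θ_s k_s (δ_{i_s} − δ_{j_s})` is
dot-conjugate to a dominant weight for every `θ ∈ {0,1}^r`. -/
theorem exists_k_tuple {m n : ℕ} (lam : Xwt m n) (hlam : dominantX lam)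
    (r : ℕ) (I J : Fin r → Idx m n)
    (hI : StrictMono fun s => ((I s : ℤ))) (hJ : StrictAnti fun s => ((J s : ℤ)))
    (hIneg : ∀ s, (I s : ℤ) < 0) (hJpos : ∀ s, 0 < (J s : ℤ))
    (horth : ∀ s, formX (fun k => lam k + rhoX m n k) (deltaX (I s) - deltaX (J s)) = 0)
    (hmax : ∀ (r' : ℕ) (I' J' : Fin r' → Idx m n),
      (StrictMono fun s => ((I' s : ℤ))) → (StrictAnti fun s => ((J' s : ℤ))) →
      (∀ s, (I' s : ℤ) < 0) → (∀ s, 0 < (J' s : ℤ)) →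
      (∀ s, formX (fun k => lam k + rhoX m n k) (deltaX (I' s) - deltaX (J' s)) = 0) →
      r' ≤ r) :
    ∃ k : Fin r → ℕ, (∀ s, 0 < k s) ∧
      ∀ θ : Fin r → ℕ, (∀ s, θ s ≤ 1) →
        dotConjDominant
          (lam + ∑ s : Fin r, ((θ s * k s : ℕ) : ℤ) • (deltaX (I s) - deltaX (J s))) := by
  classical
  set B : ℤ := ∑ p : Idx m n, |lam p + rhoX m n p| with hB
  have habs : ∀ p : Idx m n, |lam p + rhoX m n p| ≤ B := fun p =>
    Finset.single_le_sum (f := fun p : Idx m n => |lam p + rhoX m n p|)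
      (fun i _ => abs_nonneg _) (Finset.mem_univ p)
  have hB0 : 0 ≤ B := Finset.sum_nonneg fun i _ => abs_nonneg _
  set K : ℤ := 2 * B + 2 with hK
  have hKnat : ((K.toNat : ℤ)) = K := Int.toNat_of_nonneg (by omega)
  have hKpos : 0 < K.toNat := by omega
  -- injectivity of `λ + ρ` on each block
  have hainj : ∀ p q : Idx m n, (((p:ℤ) < 0 ∧ (q:ℤ) < 0) ∨ (0 < (p:ℤ) ∧ 0 < (q:ℤ))) →
      lam p + rhoX m n p = lam q + rhoX m n q → p = q := by
    intro p q hblock h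
    simp only [rhoX] at h
    rcases lt_trichotomy (p:ℤ) (q:ℤ) with hlt | heq | hlt
    · have h1 : lam q ≤ lam p := by
        refine hlam p q (le_of_lt hlt) ?_
        rcases hblock with ⟨_, h2⟩ | ⟨h2, _⟩
        · exact Or.inl h2
        · exact Or.inr h2
      exfalso; omega
    · exact Subtype.ext heq
    · have h1 : lam p ≤ lam q := by
        refine hlam q p (le_of_lt hlt) ?_
        rcases hblock with ⟨h2, _⟩ | ⟨_, h2⟩
        · exact Or.inl h2
        · exact Or.inr h2
      exfalso; omega
  refine ⟨fun s => (s.1 + 1) * K.toNat,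
    fun s => Nat.mul_pos (Nat.succ_pos _) hKpos, ?_⟩
  intro θ hθ
  -- the abstract coefficient function
  have main : ∀ M : Xwt m n,
      (∀ p : Idx m n, M p = lam p + ∑ s : Fin r,
        ((θ s : ℤ) * (((s.1 : ℤ) + 1) * K)) *
          ((if p = I s then (1:ℤ) else 0) - (if p = J s then (1:ℤ) else 0))) →
      dotConjDominant M := by
    intro M hM
    set co : Fin r → ℤ := fun s => (θ s : ℤ) * (((s.1 : ℤ) + 1) * K) with hco
    -- value of M + ρ on the negative block
    have hMneg : ∀ p : Idx m n, (p:ℤ) < 0 →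
        M p + rhoX m n p = (lam p + rhoX m n p) +
          ∑ s : Fin r, co s * (if p = I s then (1:ℤ) else 0) := by
      intro p hp
      rw [hM p]
      have h1 : ∀ s : Fin r,
          co s * ((if p = I s then (1:ℤ) else 0) - (if p = J s then (1:ℤ) else 0))
          = co s * (if p = I s then (1:ℤ) else 0) := by
        intro s
        have h2 : (if p = J s then (1:ℤ) else 0) = 0 := by
          rw [if_neg]
          intro h
          have h3 : (p:ℤ) = (J s : ℤ) := by rw [h]
          have := hJpos s; omega
        rw [h2, sub_zero]
      rw [Finset.sum_congr rfl fun s _ => h1 s]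
      ring
    have hMpos : ∀ p : Idx m n, 0 < (p:ℤ) →
        M p + rhoX m n p = (lam p + rhoX m n p) -
          ∑ s : Fin r, co s * (if p = J s then (1:ℤ) else 0) := by
      intro p hp
      rw [hM p]
      have h1 : ∀ s : Fin r,
          co s * ((if p = I s then (1:ℤ) else 0) - (if p = J s then (1:ℤ) else 0))
          = -(co s * (if p = J s then (1:ℤ) else 0)) := by
        intro s
        have h2 : (if p = I s then (1:ℤ) else 0) = 0 := by
          rw [if_neg]
          intro h
          have h3 : (p:ℤ) = (I s : ℤ) := by rw [h]
          have := hIneg s; omega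
        rw [h2, zero_sub, mul_neg]
      rw [Finset.sum_congr rfl fun s _ => h1 s, Finset.sum_neg_distrib]
      ring
    -- the correction sums are natural multiples of K
    have hw : ∀ (F : Fin r → Idx m n) (p : Idx m n), ∃ w : ℕ,
        (∑ s : Fin r, co s * (if p = F s then (1:ℤ) else 0)) = (w : ℤ) * K := by
      intro F p
      refine ⟨∑ s : Fin r, θ s * (s.1 + 1) * (if p = F s then 1 else 0), ?_⟩
      push_cast
      rw [Finset.sum_mul]
      refine Finset.sum_congr rfl fun s _ => ?_
      by_cases h : p = F s <;> simp [h, hco] <;> ring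
    -- the common cancellation argument
    have hcancel : ∀ (Ap Aq : ℤ) (wp wq : ℕ), |Ap| ≤ B → |Aq| ≤ B →
        Ap + (wp:ℤ) * K = Aq + (wq:ℤ) * K → Ap = Aq := by
      intro Ap Aq wp wq h1 h2 h3
      have h1' := abs_le.mp h1
      have h2' := abs_le.mp h2
      have hwpq : wp = wq := by
        rcases lt_trichotomy wp wq with h | h | h
        · exfalso
          have hcast : (wp:ℤ) + 1 ≤ (wq:ℤ) := by exact_mod_cast h
          have hm : ((wp:ℤ) + 1) * K ≤ (wq:ℤ) * K :=
            mul_le_mul_of_nonneg_right hcast (by omega)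
          nlinarith
        · exact h
        · exfalso
          have hcast : (wq:ℤ) + 1 ≤ (wp:ℤ) := by exact_mod_cast h
          have hm : ((wq:ℤ) + 1) * K ≤ (wp:ℤ) * K :=
            mul_le_mul_of_nonneg_right hcast (by omega)
          nlinarith
      subst hwpq
      linarith
    apply conj_of_blockInj
    · intro p q hp hq heq
      obtain ⟨wp, hwp⟩ := hw I p
      obtain ⟨wq, hwq⟩ := hw I q
      rw [hMneg p hp, hMneg q hq, hwp, hwq] at heq
      exact hainj p q (Or.inl ⟨hp, hq⟩) (hcancel _ _ wp wq (habs p) (habs q) heq)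
    · intro p q hp hq heq
      obtain ⟨wp, hwp⟩ := hw J p
      obtain ⟨wq, hwq⟩ := hw J q
      rw [hMpos p hp, hMpos q hq, hwp, hwq] at heq
      refine hainj p q (Or.inr ⟨hp, hq⟩) ?_
      refine hcancel _ _ wq wp (habs p) (habs q) ?_
      linarith
  refine main _ ?_
  intro p
  have hcoeff : ∀ s : Fin r,
      ((θ s * ((s.1 + 1) * K.toNat) : ℕ) : ℤ) = (θ s : ℤ) * (((s.1 : ℤ) + 1) * K) := by
    intro s
    push_cast [hKnat]
    ring
  simp only [Pi.add_apply, Finset.sum_apply, Pi.smul_apply, Pi.sub_apply, deltaX,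
    smul_eq_mul, hcoeff]
end

section
/- Let n ≥ 1 and m = n, and define f, g ∈ ℤ^{n|n} by f(i) = 2(n+i) and g(i) = 2(n+i)+2 for −n ≤ i ≤ −1, and f(j) = 2(n−j) and g(j) = 2(n−j)+2 for 1 ≤ j ≤ n (so f = (0,2,...,2n−2 | 2n−2,...,2,0) and g = (2,4,...,2n | 2n,...,4,2)). Then f and g are dominant with #f = #g = n, the set Θ = {θ ∈ ℕ^n : R'_θ(g) = f} is finite, and Σ_{θ ∈ Θ} q^{|θ|} = q²(1+q²)^{n−1} in the polynomial ring ℤ[q]. -/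
open Finset

section S17
open Finset
variable {n : ℕ}

lemma mem_em (n : ℕ) (t : Fin n) : (t:ℤ) - n ∈ IdxSet n n := by
  have ht := t.isLt
  simp only [IdxSet, Finset.mem_union, Finset.mem_Icc]
  omega

lemma mem_ep (n : ℕ) (t : Fin n) : (t:ℤ) + 1 ∈ IdxSet n n := by
  have ht := t.isLt
  simp only [IdxSet, Finset.mem_union, Finset.mem_Icc]
  omega

def emI (t : Fin n) : Idx n n := ⟨(t:ℤ) - n, mem_em n t⟩
def epI (t : Fin n) : Idx n n := ⟨(t:ℤ) + 1, mem_ep n t⟩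

@[simp] lemma coe_em (t : Fin n) : ((emI t : Idx n n) : ℤ) = (t:ℤ) - n := rfl
@[simp] lemma coe_ep (t : Fin n) : ((epI t : Idx n n) : ℤ) = (t:ℤ) + 1 := rfl

lemma em_neg (t : Fin n) : ((emI t : Idx n n) : ℤ) < 0 := by
  have := t.isLt; simp only [coe_em]; omega

lemma ep_pos (t : Fin n) : 0 < ((epI t : Idx n n) : ℤ) := by
  simp only [coe_ep]; positivity

lemma em_inj {t u : Fin n} (h : (emI t : Idx n n) = emI u) : t = u := by
  have : (t:ℤ) - n = (u:ℤ) - n := congrArg (Subtype.val) h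
  ext; omega

lemma ep_inj {t u : Fin n} (h : (epI t : Idx n n) = epI u) : t = u := by
  have : (t:ℤ) + 1 = (u:ℤ) + 1 := congrArg (Subtype.val) h
  ext; omega

lemma em_ne_ep (t u : Fin n) : (emI t : Idx n n) ≠ epI u := by
  intro h
  have : (t:ℤ) - n = (u:ℤ) + 1 := congrArg (Subtype.val) h
  have := t.isLt; omega

lemma idx_cases (i : Idx n n) : (∃ t, i = emI t) ∨ (∃ t, i = epI t) := by
  have hi := i.2
  simp only [IdxSet, Finset.mem_union, Finset.mem_Icc] at hi
  rcases hi with h | h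
  · left
    refine ⟨⟨((i:ℤ) + n).toNat, by omega⟩, ?_⟩
    apply Subtype.ext; simp only [coe_em]; omega
  · right
    refine ⟨⟨((i:ℤ) - 1).toNat, by omega⟩, ?_⟩
    apply Subtype.ext; simp only [coe_ep]; omega

/-- point update -/
def upd (h : Zmn n n) (i : Idx n n) (y : ℤ) : Zmn n n := fun p => if p = i then y else h p

lemma upd_apply (h : Zmn n n) (i : Idx n n) (y : ℤ) (p : Idx n n) :
    upd h i y p = if p = i then y else h p := rfl

@[simp] lemma upd_same (h : Zmn n n) (i : Idx n n) (y : ℤ) : upd h i y i = y := by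
  simp [upd]

lemma upd_other (h : Zmn n n) (i : Idx n n) (y : ℤ) {p : Idx n n} (hp : p ≠ i) :
    upd h i y p = h p := by simp [upd, hp]

/-- double update at a mirror pair, both to same value -/
def updP (h : Zmn n n) (t : Fin n) (y : ℤ) : Zmn n n :=
  upd (upd h (epI t) y) (emI (t.rev)) y

lemma updP_ep (h : Zmn n n) (t : Fin n) (y : ℤ) : updP h t y (epI t) = y := by
  simp [updP, upd, (em_ne_ep t.rev t).symm, Ne.symm (em_ne_ep t.rev t)]

lemma updP_em (h : Zmn n n) (t : Fin n) (y : ℤ) : updP h t y (emI t.rev) = y := by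
  simp [updP]

lemma updP_ep_other (h : Zmn n n) (t : Fin n) (y : ℤ) {u : Fin n} (hu : u ≠ t) :
    updP h t y (epI u) = h (epI u) := by
  rw [updP, upd_other _ _ _ (em_ne_ep t.rev u).symm, upd_other]
  exact fun hc => hu (ep_inj hc)

lemma updP_em_other (h : Zmn n n) (t : Fin n) (y : ℤ) {u : Fin n} (hu : u ≠ t.rev) :
    updP h t y (emI u) = h (emI u) := by
  rw [updP, upd_other, upd_other _ _ _ (em_ne_ep u t)]
  exact fun hc => hu (em_inj hc)

lemma shift_eq_updP (h : Zmn n n) (b : ℕ) (t : Fin n) (hsym : h (emI t.rev) = h (epI t)) :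
    h + b • (dvec (emI t.rev) - dvec (epI t)) = updP h t (h (epI t) - b) := by
  funext p
  have hep : (p = epI t ∨ p = emI t.rev) ∨ (p ≠ epI t ∧ p ≠ emI t.rev) := by tauto
  have hadd : (h + b • (dvec (emI t.rev) - dvec (epI t))) p
      = h p + (b:ℤ) * (dvec (emI t.rev) p - dvec (epI t) p) := by
    simp [Pi.add_apply, Pi.smul_apply, Pi.sub_apply, nsmul_eq_mul]
  rcases hep with (rfl | rfl) | ⟨h1, h2⟩
  · rw [hadd, updP_ep]
    have h1 : dvec (epI (n:=n) t) (epI t) = 1 := by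
      simp only [dvec, eq_self_iff_true]; rw [if_true, isgn, if_pos (ep_pos t)]
    have h2 : dvec (emI (n:=n) t.rev) (epI t) = 0 := by
      simp only [dvec]; rw [if_neg (em_ne_ep t.rev t).symm]
    rw [h1, h2]; ring
  · rw [hadd, updP_em, hsym]
    have h1 : dvec (emI (n:=n) t.rev) (emI t.rev) = -1 := by
      simp only [dvec, eq_self_iff_true]; rw [if_true, isgn, if_neg (not_lt.mpr (le_of_lt (em_neg t.rev)))]
    have h2 : dvec (epI (n:=n) t) (emI t.rev) = 0 := by
      simp only [dvec]; rw [if_neg (em_ne_ep t.rev t)]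
    rw [h1, h2]; ring
  · rw [hadd, updP, upd_other _ _ _ h2, upd_other _ _ _ h1]
    simp [dvec, h1, h2]

end S17
section S17b
open Finset
variable {n : ℕ}

lemma sumE_bij : Function.Bijective (Sum.elim (emI (n:=n)) epI) := by
  constructor
  · intro a b hab
    cases a with
    | inl t => cases b with
      | inl u => simp only [Sum.elim_inl] at hab; exact congrArg Sum.inl (em_inj hab)
      | inr u => exact absurd hab (em_ne_ep t u)
    | inr t => cases b with
      | inl u => exact absurd hab.symm (em_ne_ep u t)
      | inr u => simp only [Sum.elim_inr] at hab; exact congrArg Sum.inr (ep_inj hab)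
  · intro i
    rcases idx_cases i with ⟨t, rfl⟩ | ⟨t, rfl⟩
    exacts [⟨Sum.inl t, rfl⟩, ⟨Sum.inr t, rfl⟩]

noncomputable def sumE : (Fin n ⊕ Fin n) ≃ Idx n n := Equiv.ofBijective _ sumE_bij

lemma sumE_inl (t : Fin n) : sumE (Sum.inl t) = emI t := rfl
lemma sumE_inr (t : Fin n) : sumE (Sum.inr t) = epI t := rfl

noncomputable def blkPerm (πm πp : Equiv.Perm (Fin n)) : Equiv.Perm (Idx n n) :=
  (sumE.symm.trans (Equiv.sumCongr πm πp)).trans sumE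

lemma blkPerm_em (πm πp : Equiv.Perm (Fin n)) (t : Fin n) :
    blkPerm πm πp (emI t) = emI (πm t) := by
  have h1 : sumE.symm (emI (n:=n) t) = Sum.inl t := by
    rw [Equiv.symm_apply_eq]; rfl
  simp only [blkPerm, Equiv.trans_apply, h1, Equiv.sumCongr_apply, Sum.map_inl]; rfl

lemma blkPerm_ep (πm πp : Equiv.Perm (Fin n)) (t : Fin n) :
    blkPerm πm πp (epI t) = epI (πp t) := by
  have h1 : sumE.symm (epI (n:=n) t) = Sum.inr t := by
    rw [Equiv.symm_apply_eq]; rfl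
  simp only [blkPerm, Equiv.trans_apply, h1, Equiv.sumCongr_apply, Sum.map_inr]; rfl

lemma blkPerm_block (πm πp : Equiv.Perm (Fin n)) : blockPerm (blkPerm πm πp) := by
  intro i
  rcases idx_cases i with ⟨t, rfl⟩ | ⟨t, rfl⟩
  · rw [blkPerm_em]
    exact iff_of_false (not_lt.mpr (em_neg t).le) (not_lt.mpr (em_neg (πm t)).le)
  · rw [blkPerm_ep]
    exact iff_of_true (ep_pos t) (ep_pos (πp t))

/-- a permutation arranging given injective values in prescribed strictly monotone order -/
lemma arrange (w : Fin n → ℤ) (hw : Function.Injective w) :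
    ∃ π : Equiv.Perm (Fin n), StrictMono (fun t => w (π t)) := by
  classical
  set sp : Finset ℤ := Finset.image w Finset.univ with hsp
  have hcard : sp.card = n := by
    rw [hsp, Finset.card_image_of_injective _ hw, Finset.card_univ, Fintype.card_fin]
  have hmem : ∀ t, w t ∈ sp := fun t => Finset.mem_image_of_mem _ (Finset.mem_univ t)
  set φ := sp.orderEmbOfFin hcard with hφ
  have hF1 : Function.Bijective (fun t => (⟨w t, hmem t⟩ : sp)) := by
    rw [Fintype.bijective_iff_injective_and_card]
    constructor
    · intro a b hab
      exact hw (congrArg Subtype.val hab)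
    · rw [Fintype.card_coe, hcard, Fintype.card_fin]
  have hF2 : Function.Bijective (fun k => (⟨φ k, sp.orderEmbOfFin_mem hcard k⟩ : sp)) := by
    rw [Fintype.bijective_iff_injective_and_card]
    constructor
    · intro a b hab
      exact φ.injective (congrArg Subtype.val hab)
    · rw [Fintype.card_coe, hcard, Fintype.card_fin]
  refine ⟨(Equiv.ofBijective _ hF2).trans (Equiv.ofBijective _ hF1).symm, ?_⟩
  have key : ∀ k, w ((Equiv.ofBijective _ hF1).symm ((Equiv.ofBijective _ hF2) k)) = φ k := by
    intro k
    have := Equiv.apply_symm_apply (Equiv.ofBijective _ hF1) ((Equiv.ofBijective _ hF2) k)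
    have h2 := congrArg Subtype.val this
    exact h2
  intro a b hab
  simp only [Equiv.trans_apply]
  rw [key a, key b]
  exact (sp.orderEmbOfFin hcard).strictMono hab

lemma conjDom_of_inj (h : Zmn n n)
    (hp : ∀ t u : Fin n, h (epI t) = h (epI u) → t = u)
    (hm : ∀ t u : Fin n, h (emI t) = h (emI u) → t = u) : conjDom h := by
  obtain ⟨πm, hπm⟩ := arrange (fun t => h (emI t)) (fun a b hab => hm a b hab)
  obtain ⟨πp0, hπp0⟩ := arrange (fun t => h (epI t)) (fun a b hab => hp a b hab)
  set πp : Equiv.Perm (Fin n) := Fin.revPerm.trans πp0 with hπpdef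
  refine ⟨blkPerm πm πp, blkPerm_block πm πp, ?_⟩
  intro i j hij
  rcases idx_cases i with ⟨a, rfl⟩ | ⟨a, rfl⟩ <;> rcases idx_cases j with ⟨b, rfl⟩ | ⟨b, rfl⟩
  · constructor
    · intro _
      show h (blkPerm πm πp (emI a)) < h (blkPerm πm πp (emI b))
      rw [blkPerm_em, blkPerm_em]
      apply hπm
      simp only [coe_em] at hij
      have : (a:ℕ) < (b:ℕ) := by omega
      exact this
    · intro hpos
      exact absurd hpos (not_lt.mpr (em_neg a).le)
  · exact ⟨fun hb => absurd hb (not_lt.mpr (ep_pos b).le), 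
      fun hpos => absurd hpos (not_lt.mpr (em_neg a).le)⟩
  · exfalso
    simp only [coe_em, coe_ep] at hij
    have := b.isLt
    omega
  · constructor
    · intro hb
      exact absurd hb (not_lt.mpr (ep_pos b).le)
    · intro _
      show h (blkPerm πm πp (epI b)) < h (blkPerm πm πp (epI a))
      rw [blkPerm_ep, blkPerm_ep]
      have hab : a < b := by
        simp only [coe_ep] at hij
        have : (a:ℕ) < (b:ℕ) := by omega
        exact this
      have hrev : b.rev < a.rev := Fin.rev_lt_rev.mpr hab
      simp only [hπpdef, Equiv.trans_apply, Fin.revPerm_apply]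
      exact hπp0 hrev

lemma conjDom_injP {h : Zmn n n} (hc : conjDom h) {t u : Fin n}
    (heq : h (epI t) = h (epI u)) : t = u := by
  obtain ⟨e, hb, hd⟩ := hc
  set q1 := e.symm (epI t) with hq1
  set q2 := e.symm (epI u) with hq2
  have he1 : e q1 = epI t := Equiv.apply_symm_apply _ _
  have he2 : e q2 = epI u := Equiv.apply_symm_apply _ _
  have hp1 : 0 < (q1:ℤ) := by rw [hb q1, he1]; exact ep_pos t
  have hp2 : 0 < (q2:ℤ) := by rw [hb q2, he2]; exact ep_pos u
  rcases lt_trichotomy (q1:ℤ) (q2:ℤ) with hlt | heqq | hgt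
  · have := (hd q1 q2 hlt).2 hp1
    simp only [he1, he2] at this
    rw [heq] at this
    exact absurd this (lt_irrefl _)
  · have : q1 = q2 := Subtype.ext heqq
    have : epI (n:=n) t = epI u := by rw [← he1, ← he2, this]
    exact ep_inj this
  · have := (hd q2 q1 hgt).2 hp2
    simp only [he1, he2] at this
    rw [heq] at this
    exact absurd this (lt_irrefl _)

lemma conjDom_injM {h : Zmn n n} (hc : conjDom h) {t u : Fin n}
    (heq : h (emI t) = h (emI u)) : t = u := by
  obtain ⟨e, hb, hd⟩ := hc
  set q1 := e.symm (emI t) with hq1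
  set q2 := e.symm (emI u) with hq2
  have he1 : e q1 = emI t := Equiv.apply_symm_apply _ _
  have he2 : e q2 = emI u := Equiv.apply_symm_apply _ _
  have hp1 : (q1:ℤ) < 0 := by
    by_contra hcon
    have h0 : (0:ℤ) < q1 := by
      have := q1.2
      simp only [IdxSet, Finset.mem_union, Finset.mem_Icc] at this
      omega
    have := (hb q1).mp h0
    rw [he1] at this
    exact absurd this (not_lt.mpr (em_neg t).le)
  have hp2 : (q2:ℤ) < 0 := by
    by_contra hcon
    have h0 : (0:ℤ) < q2 := by
      have := q2.2
      simp only [IdxSet, Finset.mem_union, Finset.mem_Icc] at this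
      omega
    have := (hb q2).mp h0
    rw [he2] at this
    exact absurd this (not_lt.mpr (em_neg u).le)
  rcases lt_trichotomy (q1:ℤ) (q2:ℤ) with hlt | heqq | hgt
  · have := (hd q1 q2 hlt).1 hp2
    simp only [he1, he2] at this
    rw [heq] at this
    exact absurd this (lt_irrefl _)
  · have : q1 = q2 := Subtype.ext heqq
    have : emI (n:=n) t = emI u := by rw [← he1, ← he2, this]
    exact em_inj this
  · have := (hd q2 q1 hgt).1 hp1
    simp only [he1, he2] at this
    rw [heq] at this
    exact absurd this (lt_irrefl _)

lemma strictMono_unique {k : ℕ} (f g : Fin k → ℤ) (hf : StrictMono f) (hg : StrictMono g)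
    (him : Finset.image f Finset.univ = Finset.image g Finset.univ) : f = g := by
  classical
  set s := Finset.image g Finset.univ with hs
  have hcard : s.card = k := by
    rw [hs, Finset.card_image_of_injective _ hg.injective, Finset.card_univ, Fintype.card_fin]
  have h1 : f = s.orderEmbOfFin hcard := by
    apply Finset.orderEmbOfFin_unique hcard _ hf
    intro x
    rw [← him]
    exact Finset.mem_image_of_mem _ (Finset.mem_univ x)
  have h2 : g = s.orderEmbOfFin hcard := by
    apply Finset.orderEmbOfFin_unique hcard _ hg
    intro x
    exact Finset.mem_image_of_mem _ (Finset.mem_univ x)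
  rw [h1, h2]

end S17b
section S17c
open Finset
variable {n : ℕ}

/-- membership in the set `E` of processed values: evens in `[0,2s]` except `v` -/
def memE (s : ℕ) (v x : ℤ) : Prop := x % 2 = 0 ∧ 0 ≤ x ∧ x ≤ 2*s ∧ x ≠ v

/-- invariant during stage `s`: active entry has value `x` -/
structure GoodX (s : ℕ) (v x : ℤ) (h : Zmn n n) : Prop where
  hs : s < n
  hvE : v % 2 = 0
  hv0 : 0 ≤ v
  hvs : v ≤ 2*s
  sym : ∀ t : Fin n, h (emI t.rev) = h (epI t)
  unp : ∀ t : Fin n, (t:ℕ) + s + 1 < n → h (epI t) = 2*((n:ℤ) - (t:ℕ))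
  act : ∀ t : Fin n, (t:ℕ) + s + 1 = n → h (epI t) = x
  xtraj : x = 2*s+2 ∨ x = 2*s+1 ∨ x = v ∨ x = v - 1 ∨ x ≤ -2
  pE : ∀ t : Fin n, n ≤ (t:ℕ) + s → memE s v (h (epI t))
  pinj : ∀ t u : Fin n, n ≤ (t:ℕ) + s → n ≤ (u:ℕ) + s → h (epI t) = h (epI u) → t = u
  psurj : ∀ y : ℤ, memE s v y → ∃ t : Fin n, n ≤ (t:ℕ) + s ∧ h (epI t) = y

/-- invariant between stages -/
structure Good (s : ℕ) (v : ℤ) (h : Zmn n n) : Prop where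
  hsn : s ≤ n
  hvE : v % 2 = 0
  hv0 : 0 ≤ v
  hvs : v ≤ 2*s
  sym : ∀ t : Fin n, h (emI t.rev) = h (epI t)
  unp : ∀ t : Fin n, (t:ℕ) + s < n → h (epI t) = 2*((n:ℤ) - (t:ℕ))
  pE : ∀ t : Fin n, n ≤ (t:ℕ) + s → memE s v (h (epI t))
  pinj : ∀ t u : Fin n, n ≤ (t:ℕ) + s → n ≤ (u:ℕ) + s → h (epI t) = h (epI u) → t = u
  psurj : ∀ y : ℤ, memE s v y → ∃ t : Fin n, n ≤ (t:ℕ) + s ∧ h (epI t) = y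

lemma Good.toX {s : ℕ} {v : ℤ} {h : Zmn n n} (hg : Good s v h) (hs : s < n) :
    GoodX s v (2*s+2) h where
  hs := hs
  hvE := hg.hvE
  hv0 := hg.hv0
  hvs := hg.hvs
  sym := hg.sym
  unp := fun t ht => hg.unp t (by omega)
  act := fun t ht => by rw [hg.unp t (by omega)]; push_cast; omega
  xtraj := Or.inl rfl
  pE := hg.pE
  pinj := hg.pinj
  psurj := hg.psurj

variable {s : ℕ} {v x : ℤ} {h : Zmn n n}

lemma GoodX.xNotE (hg : GoodX s v x h) : ¬ memE s v x := by
  rcases hg.xtraj with h1 | h1 | h1 | h1 | h1 <;>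
    (intro ⟨e1, e2, e3, e4⟩; first | omega | (exact e4 h1) |
        (have := hg.hvE; omega))

lemma GoodX.xNotE1 (hg : GoodX s v x h) : ¬ memE s v (x+1) := by
  rcases hg.xtraj with h1 | h1 | h1 | h1 | h1 <;>
    (intro ⟨e1, e2, e3, e4⟩; have hv := hg.hvE; have hv0 := hg.hv0; omega)

lemma GoodX.xle (hg : GoodX s v x h) : x ≤ 2*(s:ℤ)+2 := by
  rcases hg.xtraj with h1 | h1 | h1 | h1 | h1 <;> (have := hg.hvs; have := hg.hv0; omega)

lemma GoodX.symm' (hg : GoodX s v x h) (t : Fin n) : h (emI t) = h (epI t.rev) := by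
  have := hg.sym t.rev
  rwa [Fin.rev_rev] at this

/-- trichotomy of zones for a positive index -/
lemma GoodX.val_cases (hg : GoodX s v x h) (u : Fin n) :
    (n ≤ (u:ℕ) + s ∧ memE s v (h (epI u))) ∨ ((u:ℕ) + s + 1 = n ∧ h (epI u) = x) ∨
    ((u:ℕ) + s + 1 < n ∧ 2*(s:ℤ)+4 ≤ h (epI u)) := by
  have hu := u.isLt
  rcases (by omega : n ≤ (u:ℕ) + s ∨ (u:ℕ) + s + 1 = n ∨ (u:ℕ) + s + 1 < n) with h1 | h1 | h1
  · exact Or.inl ⟨h1, hg.pE u h1⟩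
  · exact Or.inr (Or.inl ⟨h1, hg.act u h1⟩)
  · refine Or.inr (Or.inr ⟨h1, ?_⟩)
    rw [hg.unp u h1]; push_cast; omega

lemma GoodX.posInj (hg : GoodX s v x h) : ∀ t u : Fin n, h (epI t) = h (epI u) → t = u := by
  intro t u heq
  rcases hg.val_cases t with ⟨p1, q1⟩ | ⟨p1, q1⟩ | ⟨p1, q1⟩ <;>
    rcases hg.val_cases u with ⟨p2, q2⟩ | ⟨p2, q2⟩ | ⟨p2, q2⟩
  · exact hg.pinj t u p1 p2 heq
  · exact absurd (by rw [← q2, ← heq]; exact q1 : memE s v x) hg.xNotE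
  · rcases q1 with ⟨e1, e2, e3, e4⟩; omega
  · exact absurd (by rw [← q1, heq]; exact q2 : memE s v x) hg.xNotE
  · ext; omega
  · have := hg.xle; omega
  · rcases q2 with ⟨e1, e2, e3, e4⟩; omega
  · have := hg.xle; omega
  · rw [hg.unp t p1, hg.unp u p2] at heq
    have : (t:ℕ) = (u:ℕ) := by omega
    ext; omega

lemma GoodX.conjDom' (hg : GoodX s v x h) (hsym : ∀ t : Fin n, h (emI t.rev) = h (epI t))
    (hp : ∀ t u : Fin n, h (epI t) = h (epI u) → t = u) : conjDom h := by
  apply conjDom_of_inj h hp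
  intro t u heq
  have h1 : h (epI t.rev) = h (epI u.rev) := by
    rw [← hsym t.rev, ← hsym u.rev, Fin.rev_rev, Fin.rev_rev]; exact heq
  have := hp _ _ h1
  have : t.rev.rev = u.rev.rev := by rw [this]
  rwa [Fin.rev_rev, Fin.rev_rev] at this

/-- a processed entry's value minus 1 is fresh -/
lemma GoodX.ne_shadow (hg : GoodX s v x h) {t' : Fin n} (ht' : n ≤ (t':ℕ) + s) {u : Fin n} (hu : u ≠ t') :
    h (epI u) ≠ h (epI t') - 1 := by
  intro heq
  obtain ⟨e1, e2, e3, e4⟩ := hg.pE t' ht'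
  rcases hg.val_cases u with ⟨p1, q1⟩ | ⟨p1, q1⟩ | ⟨p1, q1⟩
  · obtain ⟨f1, f2, f3, f4⟩ := q1; omega
  · apply hg.xNotE1
    have hx : x + 1 = h (epI t') := by rw [← q1, heq]; ring
    rw [hx]
    exact ⟨e1, e2, e3, e4⟩
  · omega

lemma conjDom_of_sym {h : Zmn n n} (hsym : ∀ t : Fin n, h (emI t.rev) = h (epI t))
    (hp : ∀ t u : Fin n, h (epI t) = h (epI u) → t = u) : conjDom h := by
  apply conjDom_of_inj h hp
  intro t u heq
  have hsym' : ∀ w : Fin n, h (emI w) = h (epI w.rev) := by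
    intro w; have := hsym w.rev; rwa [Fin.rev_rev] at this
  have h1 : h (epI t.rev) = h (epI u.rev) := by rw [← hsym' t, ← hsym' u]; exact heq
  have h2 := hp _ _ h1
  have h3 : t.rev.rev = u.rev.rev := by rw [h2]
  rwa [Fin.rev_rev, Fin.rev_rev] at h3

lemma updP_sym {h : Zmn n n} (hsym : ∀ t : Fin n, h (emI t.rev) = h (epI t))
    (t0 : Fin n) (y : ℤ) : ∀ t : Fin n, updP h t0 y (emI t.rev) = updP h t0 y (epI t) := by
  intro t
  by_cases ht : t = t0
  · subst ht; rw [updP_em, updP_ep]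
  · rw [updP_em_other _ _ _ (fun hc => ht (by
        have := congrArg Fin.rev hc; rwa [Fin.rev_rev, Fin.rev_rev] at this)),
      updP_ep_other _ _ _ ht]
    exact hsym t

lemma posInj_updP {h : Zmn n n} {t0 : Fin n} {y : ℤ}
    (hp : ∀ t u : Fin n, h (epI t) = h (epI u) → t = u)
    (hy : ∀ u : Fin n, u ≠ t0 → h (epI u) ≠ y) :
    ∀ t u : Fin n, updP h t0 y (epI t) = updP h t0 y (epI u) → t = u := by
  intro t u heq
  by_cases h1 : t = t0 <;> by_cases h2 : u = t0
  · rw [h1, h2]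
  · subst h1; rw [updP_ep, updP_ep_other _ _ _ h2] at heq
    exact absurd heq.symm (hy u h2)
  · subst h2; rw [updP_ep, updP_ep_other _ _ _ h1] at heq
    exact absurd heq (hy t h1)
  · rw [updP_ep_other _ _ _ h1, updP_ep_other _ _ _ h2] at heq
    exact hp t u heq

end S17c
section S17d
open Finset
variable {n : ℕ} {s : ℕ} {v x : ℤ} {h : Zmn n n}

lemma updP_apply' (h : Zmn n n) (t : Fin n) (y : ℤ) (p : Idx n n) :
    updP h t y p = if p = emI t.rev then y else if p = epI t then y else h p := rfl

lemma updP_updP (h : Zmn n n) (t : Fin n) (y z : ℤ) :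
    updP (updP h t y) t z = updP h t z := by
  funext p
  rw [updP_apply', updP_apply', updP_apply']
  split_ifs <;> rfl

lemma updP_self (h : Zmn n n) (t : Fin n) (hsym : h (emI t.rev) = h (epI t)) :
    updP h t (h (epI t)) = h := by
  funext p
  rw [updP_apply']
  split_ifs with h1 h2
  · rw [h1, hsym]
  · rw [h2]
  · rfl

/-- structure of the recursive pairs occurring in `Rop` -/
lemma GoodX.pair_struct (hg : GoodX s v x h) (t : Fin n) (htb : n ≤ (t:ℕ) + s + 1) :
    ∀ k l : Idx n n, (k:ℤ) < ((emI t.rev : Idx n n):ℤ) → ((epI t : Idx n n):ℤ) < (l:ℤ) →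
      h k = h l →
      ∃ t' : Fin n, n ≤ (t':ℕ) + s ∧ (t:ℕ) < (t':ℕ) ∧ k = emI t'.rev ∧ l = epI t' := by
  intro k l hk hl hkl
  have htr : ((t.rev : Fin n):ℕ) = n - 1 - (t:ℕ) := by
    rw [Fin.val_rev]; omega
  have htlt := t.isLt
  rcases idx_cases k with ⟨u, rfl⟩ | ⟨u, rfl⟩
  case inr => exfalso; simp only [coe_ep, coe_em] at hk; have := u.isLt; omega
  rcases idx_cases l with ⟨w, rfl⟩ | ⟨w, rfl⟩
  case inl => exfalso; simp only [coe_ep, coe_em] at hl; have := w.isLt; omega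
  have hw : w = u.rev := by
    have h1 : h (epI u.rev) = h (epI w) := by rw [← hg.symm' u]; exact hkl
    exact (hg.posInj _ _ h1).symm
  subst hw
  have hulr : (u:ℕ) < ((t.rev : Fin n):ℕ) := by simp only [coe_em] at hk; omega
  have hur : ((u.rev : Fin n):ℕ) = n - 1 - (u:ℕ) := by rw [Fin.val_rev]; omega
  have hult := u.isLt
  refine ⟨u.rev, by omega, by omega, by rw [Fin.rev_rev], rfl⟩

lemma GoodX.shadow_aux (hg : GoodX s v x h) :
    ∀ K : ℕ, ∀ t : Fin n, n - 1 - (t:ℕ) < K → n ≤ (t:ℕ) + s →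
      Rop n n (emI t.rev) (epI t) h = updP h t (h (epI t) - 1) := by
  intro K
  induction K with
  | zero => intro t h1 h2; omega
  | succ K IH =>
    intro t hK ht
    have hsymt : h (emI t.rev) = h (epI t) := hg.sym t
    have hne_t : ∀ u : Fin n, u ≠ t → h (epI u) ≠ h (epI t) - 1 := fun u hu => hg.ne_shadow ht hu
    have hpair := hg.pair_struct t (by omega)
    have key : ∀ t' : Fin n, n ≤ (t':ℕ) + s → (t:ℕ) < (t':ℕ) →
        Rop n n (emI t'.rev) (epI t') h = updP h t' (h (epI t') - 1) := by
      intro t' h1 h2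
      have := t'.isLt
      exact IH t' (by omega) h1
    rw [Rop]
    have hmem1 : 1 ∈ {b : ℕ | 0 < b ∧ conjDom (h + b • (dvec (emI t.rev) - dvec (epI t))) ∧
        ∀ k l : Idx n n, (k:ℤ) < ((emI t.rev : Idx n n):ℤ) → ((epI t : Idx n n):ℤ) < (l:ℤ) →
          h k = h l → conjDom (Rop n n k l h + b • (dvec (emI t.rev) - dvec (epI t)))} := by
      refine ⟨one_pos, ?_, ?_⟩
      · rw [shift_eq_updP h 1 t hsymt]
        push_cast
        exact conjDom_of_sym (updP_sym hg.sym t _)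
          (posInj_updP hg.posInj (fun u hu => by push_cast; exact hne_t u hu))
      · intro k l hk hl hkl
        obtain ⟨t', hp1, hp2, rfl, rfl⟩ := hpair k l hk hl hkl
        rw [key t' hp1 hp2]
        have htne : t ≠ t' := fun hc => by omega
        have hsym2 := updP_sym hg.sym t' (h (epI t') - 1)
        rw [shift_eq_updP _ 1 t (hsym2 t)]
        rw [updP_ep_other _ _ _ htne]
        push_cast
        apply conjDom_of_sym (updP_sym (updP_sym hg.sym t' _) t _)
        apply posInj_updP (posInj_updP hg.posInj (fun u hu => hg.ne_shadow hp1 hu))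
        intro u hu
        by_cases hut : u = t'
        · subst hut
          rw [updP_ep]
          intro hc
          have : h (epI u) = h (epI t) := by
            have := hg.pinj u t hp1 ht
            omega
          exact htne ((hg.posInj t u this.symm))
        · rw [updP_ep_other _ _ _ hut]
          exact hne_t u hu
    have hsinf : sInf {b : ℕ | 0 < b ∧ conjDom (h + b • (dvec (emI t.rev) - dvec (epI t))) ∧
        ∀ k l : Idx n n, (k:ℤ) < ((emI t.rev : Idx n n):ℤ) → ((epI t : Idx n n):ℤ) < (l:ℤ) →
          h k = h l → conjDom (Rop n n k l h + b • (dvec (emI t.rev) - dvec (epI t)))} = 1 := by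
      apply le_antisymm (Nat.sInf_le hmem1)
      have hne : {b : ℕ | 0 < b ∧ conjDom (h + b • (dvec (emI t.rev) - dvec (epI t))) ∧
        ∀ k l : Idx n n, (k:ℤ) < ((emI t.rev : Idx n n):ℤ) → ((epI t : Idx n n):ℤ) < (l:ℤ) →
          h k = h l → conjDom (Rop n n k l h + b • (dvec (emI t.rev) - dvec (epI t)))}.Nonempty :=
        ⟨1, hmem1⟩
      have := Nat.sInf_mem hne
      exact this.1
    rw [hsinf, shift_eq_updP h 1 t hsymt]
    push_cast
    rfl

lemma GoodX.shadow (hg : GoodX s v x h) (t : Fin n) (ht : n ≤ (t:ℕ) + s) :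
    Rop n n (emI t.rev) (epI t) h = updP h t (h (epI t) - 1) := by
  have := t.isLt
  exact hg.shadow_aux n t (by omega) ht

end S17d
section S17e
open Finset
variable {n : ℕ} {s : ℕ} {v x : ℤ} {h : Zmn n n}

def nextV (s : ℕ) (v x : ℤ) : ℤ :=
  if x = 2*s+2 then 2*s+1 else if x = 2*s+1 then v else if x = v then v-1
  else if x = v-1 then -2 else x-1

lemma nextV_spec (hvE : v % 2 = 0) (hv0 : 0 ≤ v) (hvs : v ≤ 2*(s:ℤ))
    (hx : x = 2*s+2 ∨ x = 2*s+1 ∨ x = v ∨ x = v-1 ∨ x ≤ -2) :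
    nextV s v x < x ∧
    (nextV s v x = 2*s+1 ∨ nextV s v x = v ∨ nextV s v x = v-1 ∨ nextV s v x ≤ -2) ∧
    (∀ y : ℤ, nextV s v x < y → y < x → memE s v y ∨ memE s v (y+1)) := by
  unfold nextV
  split_ifs with h1 h2 h3 h4 <;>
    refine ⟨by omega, by omega, fun y hy1 hy2 => ?_⟩ <;> (unfold memE; omega)

lemma GoodX.ne_of_notE (hg : GoodX s v x h) {y : ℤ} (hyE : ¬ memE s v y)
    (hyx : y < x) : ∀ u : Fin n, u ≠ t₀ → True := fun _ _ => trivial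

/-- values other than at unprocessed-or-t positions differ from a fresh small value -/
lemma GoodX.ne_val (hg : GoodX s v x h) {t : Fin n} (hact : (t:ℕ) + s + 1 = n)
    {y : ℤ} (hyE : ¬ memE s v y) (hyx : y ≤ 2*(s:ℤ)+2) :
    ∀ u : Fin n, u ≠ t → h (epI u) ≠ y := by
  intro u hu heq
  rcases hg.val_cases u with ⟨p1, q1⟩ | ⟨p1, q1⟩ | ⟨p1, q1⟩
  · exact hyE (heq ▸ q1)
  · exact hu (by ext; omega)
  · omega

lemma GoodX.step (hg : GoodX s v x h) (t : Fin n) (hact : (t:ℕ) + s + 1 = n) :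
    Rop n n (emI t.rev) (epI t) h = updP h t (nextV s v x) := by
  obtain ⟨hlt, htraj, hbetween⟩ := nextV_spec hg.hvE hg.hv0 hg.hvs hg.xtraj
  set y := nextV s v x with hy
  have hx : h (epI t) = x := hg.act t hact
  have hv1 := hg.hvE
  have hv2 := hg.hv0
  have hv3 := hg.hvs
  have hyE : ¬ memE s v y := by unfold memE; omega
  have hyE1 : ¬ memE s v (y+1) := by
    rcases hg.xtraj with h1 | h1 | h1 | h1 | h1 <;> (unfold memE; omega)
  have hylt : y ≤ 2*(s:ℤ)+2 := le_trans hlt.le hg.xle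
  have hne := hg.ne_val hact hyE hylt
  have hpair := hg.pair_struct t (by omega)
  have hsymt := hg.sym t
  have hb0 : ((x - y).toNat : ℤ) = x - y := Int.toNat_of_nonneg (by omega)
  rw [Rop]
  have hmem : (x-y).toNat ∈ {b : ℕ | 0 < b ∧ conjDom (h + b • (dvec (emI t.rev) - dvec (epI t))) ∧
      ∀ k l : Idx n n, (k:ℤ) < ((emI t.rev : Idx n n):ℤ) → ((epI t : Idx n n):ℤ) < (l:ℤ) →
        h k = h l → conjDom (Rop n n k l h + b • (dvec (emI t.rev) - dvec (epI t)))} := by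
    refine ⟨by omega, ?_, ?_⟩
    · rw [shift_eq_updP h _ t hsymt, hx, hb0]
      have : x - (x - y) = y := by ring
      rw [this]
      exact conjDom_of_sym (updP_sym hg.sym t _) (posInj_updP hg.posInj hne)
    · intro k l hk hl hkl
      obtain ⟨t', hp1, hp2, rfl, rfl⟩ := hpair k l hk hl hkl
      rw [hg.shadow t' hp1]
      have htne : t ≠ t' := fun hc => by omega
      have hsym2 := updP_sym hg.sym t' (h (epI t') - 1)
      rw [shift_eq_updP _ _ t (hsym2 t), updP_ep_other _ _ _ htne, hx, hb0]
      have : x - (x - y) = y := by ring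
      rw [this]
      apply conjDom_of_sym (updP_sym (updP_sym hg.sym t' _) t _)
      apply posInj_updP (posInj_updP hg.posInj (fun u hu => hg.ne_shadow hp1 hu))
      intro u hu
      by_cases hut : u = t'
      · subst hut
        rw [updP_ep]
        intro hc
        exact hyE1 (by rw [← hc]; have := hg.pE u hp1; unfold memE at this ⊢; omega)
      · rw [updP_ep_other _ _ _ hut]
        exact hne u hu
  have hsinf : sInf {b : ℕ | 0 < b ∧ conjDom (h + b • (dvec (emI t.rev) - dvec (epI t))) ∧
      ∀ k l : Idx n n, (k:ℤ) < ((emI t.rev : Idx n n):ℤ) → ((epI t : Idx n n):ℤ) < (l:ℤ) →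
        h k = h l → conjDom (Rop n n k l h + b • (dvec (emI t.rev) - dvec (epI t)))}
      = (x-y).toNat := by
    apply le_antisymm (Nat.sInf_le hmem)
    apply le_csInf ⟨_, hmem⟩
    intro b hb
    by_contra hcon
    push_neg at hcon
    obtain ⟨hb0', hbconj, hbrec⟩ := hb
    set z := x - (b:ℤ) with hz
    have hzy : y < z := by omega
    have hzx : z < x := by omega
    rcases hbetween z hzy hzx with hmemz | hmemz1
    · obtain ⟨u, hu1, hu2⟩ := hg.psurj z hmemz
      have hut : u ≠ t := fun hc => by omega
      rw [shift_eq_updP h _ t hsymt, hx] at hbconj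
      have hval : updP h t (x - (b:ℤ)) (epI u) = updP h t (x - (b:ℤ)) (epI t) := by
        rw [updP_ep, updP_ep_other _ _ _ hut, hu2]
      exact hut (conjDom_injP (by exact_mod_cast hbconj) hval)
    · obtain ⟨u, hu1, hu2⟩ := hg.psurj (z+1) hmemz1
      have hut : (t:ℕ) < (u:ℕ) := by omega
      have hcond := hbrec (emI u.rev) (epI u) (by
          simp only [coe_em]
          have h1 : ((u.rev : Fin n):ℕ) = n - 1 - (u:ℕ) := by rw [Fin.val_rev]; omega
          have h2 : ((t.rev : Fin n):ℕ) = n - 1 - (t:ℕ) := by rw [Fin.val_rev]; omega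
          have := u.isLt
          omega)
        (by simp only [coe_ep]; omega)
        (hg.sym u)
      rw [hg.shadow u (by omega)] at hcond
      have htne : t ≠ u := fun hc => by omega
      have hsym2 := updP_sym hg.sym u (h (epI u) - 1)
      rw [shift_eq_updP _ _ t (hsym2 t), updP_ep_other _ _ _ htne, hx] at hcond
      have hval : updP (updP h u (h (epI u) - 1)) t (x - (b:ℤ)) (epI u)
          = updP (updP h u (h (epI u) - 1)) t (x - (b:ℤ)) (epI t) := by
        rw [updP_ep, updP_ep_other _ _ _ htne.symm, updP_ep, hu2]
        ring
      exact htne.symm (conjDom_injP (by exact_mod_cast hcond) hval)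
  rw [hsinf, shift_eq_updP h _ t hsymt, hx, hb0]
  have : x - (x - y) = y := by ring
  rw [this]

/-- after the step, the invariant is restored with the new value -/
lemma GoodX.nextGood (hg : GoodX s v x h) (t : Fin n) (hact : (t:ℕ) + s + 1 = n) :
    GoodX s v (nextV s v x) (updP h t (nextV s v x)) := by
  obtain ⟨hlt, htraj, _⟩ := nextV_spec hg.hvE hg.hv0 hg.hvs hg.xtraj
  set y := nextV s v x with hy
  refine ⟨hg.hs, hg.hvE, hg.hv0, hg.hvs, updP_sym hg.sym t y, ?_, ?_, by tauto, ?_, ?_, ?_⟩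
  · intro u hu
    rw [updP_ep_other _ _ _ (fun hc => by subst hc; omega)]
    exact hg.unp u hu
  · intro u hu
    have : u = t := by ext; omega
    subst this
    rw [updP_ep]
  · intro u hu
    rw [updP_ep_other _ _ _ (fun hc => by subst hc; omega)]
    exact hg.pE u hu
  · intro a b ha hb
    rw [updP_ep_other _ _ _ (fun hc => by subst hc; omega),
      updP_ep_other _ _ _ (fun hc => by subst hc; omega)]
    exact hg.pinj a b ha hb
  · intro w hw
    obtain ⟨u, hu1, hu2⟩ := hg.psurj w hw
    refine ⟨u, hu1, ?_⟩
    rw [updP_ep_other _ _ _ (fun hc => by subst hc; omega)]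
    exact hu2

def trajV (s : ℕ) (v : ℤ) : ℕ → ℤ
  | 0 => 2*s+2
  | (k+1) => nextV s v (trajV s v k)

lemma GoodX.iter (hg : GoodX s v (2*(s:ℤ)+2) h) (t : Fin n) (hact : (t:ℕ) + s + 1 = n) :
    ∀ θ : ℕ, (Rop n n (emI t.rev) (epI t))^[θ] h = updP h t (trajV s v θ) ∧
      GoodX s v (trajV s v θ) ((Rop n n (emI t.rev) (epI t))^[θ] h) := by
  intro θ
  induction θ with
  | zero =>
    constructor
    · rw [Function.iterate_zero_apply]
      have : trajV s v 0 = h (epI t) := by rw [hg.act t hact]; rfl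
      rw [this, updP_self h t (hg.sym t)]
    · exact hg
  | succ θ IH =>
    obtain ⟨IH1, IH2⟩ := IH
    have htr : trajV s v (θ+1) = nextV s v (trajV s v θ) := rfl
    have hstep := IH2.step t hact
    have hnext := IH2.nextGood t hact
    rw [IH1, updP_updP] at hstep hnext
    constructor
    · rw [Function.iterate_succ_apply', IH1, hstep, htr]
    · rw [Function.iterate_succ_apply', IH1, hstep, htr]
      exact htr ▸ hnext

end S17e
section S17f
open Finset
variable {n : ℕ} {s : ℕ} {v x : ℤ} {h : Zmn n n}

lemma trajV_one : trajV s v 1 = 2*s+1 := by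
  show nextV s v (2*s+2) = 2*s+1
  unfold nextV
  rw [if_pos rfl]

lemma trajV_two : trajV s v 2 = v := by
  show nextV s v (trajV s v 1) = v
  rw [trajV_one]
  unfold nextV
  rw [if_neg (by omega), if_pos rfl]

lemma trajV_three (hvE : v % 2 = 0) (hvs : v ≤ 2*(s:ℤ)) : trajV s v 3 = v - 1 := by
  show nextV s v (trajV s v 2) = v - 1
  rw [trajV_two]
  unfold nextV
  rw [if_neg (by omega), if_neg (by omega), if_pos rfl]

lemma trajV_four (hvE : v % 2 = 0) (hv0 : 0 ≤ v) (hvs : v ≤ 2*(s:ℤ)) :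
    trajV s v 4 = -2 := by
  show nextV s v (trajV s v 3) = -2
  rw [trajV_three hvE hvs]
  unfold nextV
  rw [if_neg (by omega), if_neg (by omega), if_neg (by omega), if_pos rfl]

lemma trajV_neg (hvE : v % 2 = 0) (hv0 : 0 ≤ v) (hvs : v ≤ 2*(s:ℤ)) :
    ∀ θ : ℕ, 4 ≤ θ → trajV s v θ ≤ -2 := by
  intro θ
  induction θ with
  | zero => omega
  | succ θ IH =>
    intro hθ
    rcases (by omega : θ = 3 ∨ 4 ≤ θ) with h1 | h1
    · subst h1; rw [trajV_four hvE hv0 hvs]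
    · have := IH h1
      show nextV s v (trajV s v θ) ≤ -2
      unfold nextV
      rw [if_neg (by omega), if_neg (by omega), if_neg (by omega), if_neg (by omega)]
      omega

lemma trajV_odd (hvE : v % 2 = 0) (hvs : v ≤ 2*(s:ℤ)) {θ : ℕ} (hθ : θ = 1 ∨ θ = 3) :
    (trajV s v θ) % 2 = 1 := by
  rcases hθ with rfl | rfl
  · rw [trajV_one]; omega
  · rw [trajV_three hvE hvs]; omega

/-- θ = 0 transition -/
lemma Good.succ0 (hg : Good s v h) (hs : s < n) : Good (s+1) v h := by
  refine ⟨by omega, hg.hvE, hg.hv0, by push_cast; have := hg.hvs; omega, hg.sym, ?_, ?_, ?_, ?_⟩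
  · intro u hu
    exact hg.unp u (by omega)
  · intro u hu
    rcases (by omega : n ≤ (u:ℕ) + s ∨ (u:ℕ) + s + 1 = n) with h1 | h1
    · obtain ⟨e1, e2, e3, e4⟩ := hg.pE u h1
      exact ⟨e1, e2, by push_cast; omega, e4⟩
    · rw [hg.unp u (by omega)]
      have := hg.hvs
      refine ⟨by omega, by push_cast; omega, by push_cast; omega, by push_cast; omega⟩
  · intro a b ha hb heq
    rcases (by omega : n ≤ (a:ℕ) + s ∨ (a:ℕ) + s + 1 = n) with h1 | h1 <;>
      rcases (by omega : n ≤ (b:ℕ) + s ∨ (b:ℕ) + s + 1 = n) with h2 | h2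
    · exact hg.pinj a b h1 h2 heq
    · exfalso
      obtain ⟨e1, e2, e3, e4⟩ := hg.pE a h1
      rw [hg.unp b (by omega)] at heq
      have hb' := b.isLt
      omega
    · exfalso
      obtain ⟨e1, e2, e3, e4⟩ := hg.pE b h2
      rw [hg.unp a (by omega)] at heq
      have ha' := a.isLt
      omega
    · ext; omega
  · intro w hw
    obtain ⟨e1, e2, e3, e4⟩ := hw
    rcases (by omega : w ≤ 2*(s:ℤ) ∨ w = 2*(s:ℤ)+1 ∨ w = 2*(s:ℤ)+2) with h1 | h1 | h1
    · obtain ⟨u, hu1, hu2⟩ := hg.psurj w ⟨e1, e2, h1, e4⟩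
      exact ⟨u, by omega, hu2⟩
    · omega
    · have hne : n - s - 1 < n := by omega
      refine ⟨⟨n - s - 1, hne⟩, by simp; omega, ?_⟩
      rw [hg.unp _ (by simp; omega)]
      simp
      omega

/-- θ = 2 transition: active entry moved to `v`, new vacancy `2s+2` -/
lemma Good.succ2 (hg : Good s v h) (hs : s < n) (t : Fin n) (hact : (t:ℕ) + s + 1 = n) :
    Good (s+1) (2*(s:ℤ)+2) (updP h t v) := by
  have hvE := hg.hvE; have hv0 := hg.hv0; have hvs := hg.hvs
  have hne_t : ∀ u : Fin n, n ≤ (u:ℕ) + s → u ≠ t := fun u hu hc => by subst hc; omega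
  refine ⟨by omega, by omega, by omega, by push_cast; omega, updP_sym hg.sym t v, ?_, ?_, ?_, ?_⟩
  · intro u hu
    rw [updP_ep_other _ _ _ (fun hc => by subst hc; omega)]
    exact hg.unp u (by omega)
  · intro u hu
    by_cases hut : u = t
    · subst hut
      rw [updP_ep]
      exact ⟨by omega, by omega, by push_cast; omega, by omega⟩
    · have h1 : n ≤ (u:ℕ) + s := by
        rcases (by omega : n ≤ (u:ℕ) + s ∨ (u:ℕ) + s + 1 = n) with h2 | h2
        · exact h2
        · exact absurd (by ext; omega : u = t) hut
      rw [updP_ep_other _ _ _ hut]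
      obtain ⟨e1, e2, e3, e4⟩ := hg.pE u h1
      exact ⟨e1, e2, by push_cast; omega, by omega⟩
  · intro a b ha hb heq
    by_cases h1 : a = t <;> by_cases h2 : b = t
    · rw [h1, h2]
    · exfalso
      rw [h1] at heq
      have hbp : n ≤ (b:ℕ) + s := by
        rcases (by omega : n ≤ (b:ℕ) + s ∨ (b:ℕ) + s + 1 = n) with h3 | h3
        · exact h3
        · exact absurd (by ext; omega : b = t) h2
      rw [updP_ep, updP_ep_other _ _ _ h2] at heq
      obtain ⟨e1, e2, e3, e4⟩ := hg.pE b hbp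
      omega
    · exfalso
      rw [h2] at heq
      have hap : n ≤ (a:ℕ) + s := by
        rcases (by omega : n ≤ (a:ℕ) + s ∨ (a:ℕ) + s + 1 = n) with h3 | h3
        · exact h3
        · exact absurd (by ext; omega : a = t) h1
      rw [updP_ep, updP_ep_other _ _ _ h1] at heq
      obtain ⟨e1, e2, e3, e4⟩ := hg.pE a hap
      omega
    · have hap : n ≤ (a:ℕ) + s := by
        rcases (by omega : n ≤ (a:ℕ) + s ∨ (a:ℕ) + s + 1 = n) with h3 | h3
        · exact h3
        · exact absurd (by ext; omega : a = t) h1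
      have hbp : n ≤ (b:ℕ) + s := by
        rcases (by omega : n ≤ (b:ℕ) + s ∨ (b:ℕ) + s + 1 = n) with h3 | h3
        · exact h3
        · exact absurd (by ext; omega : b = t) h2
      rw [updP_ep_other _ _ _ h1, updP_ep_other _ _ _ h2] at heq
      exact hg.pinj a b hap hbp heq
  · intro w hw
    obtain ⟨e1, e2, e3, e4⟩ := hw
    by_cases hwv : w = v
    · subst hwv
      exact ⟨t, by omega, by rw [updP_ep]⟩
    · have h1 : w ≤ 2*(s:ℤ) := by push_cast at e3; omega
      obtain ⟨u, hu1, hu2⟩ := hg.psurj w ⟨e1, e2, h1, hwv⟩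
      exact ⟨u, by omega, by rw [updP_ep_other _ _ _ (hne_t u hu1)]; exact hu2⟩

/-- the state `g` is Good 0 0 -/
lemma good_start (g : Zmn n n)
    (hgpos : ∀ t : Fin n, g (epI t) = 2*((n:ℤ) - (t:ℕ)))
    (hgsym : ∀ t : Fin n, g (emI t.rev) = g (epI t)) : Good 0 0 g := by
  refine ⟨by omega, by omega, le_refl _, by omega, hgsym, ?_, ?_, ?_, ?_⟩
  · intro u _; exact hgpos u
  · intro u hu; have := u.isLt; omega
  · intro a b ha hb _; have := a.isLt; omega
  · intro w hw; obtain ⟨e1, e2, e3, e4⟩ := hw; omega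

end S17f
section S17g
open Finset
variable {n : ℕ}

lemma fin_gap (f : Fin n → ℤ) (hf : StrictMono f) :
    ∀ k : ℕ, ∀ a b : Fin n, (a:ℕ) + k = (b:ℕ) → f a + k ≤ f b := by
  intro k
  induction k with
  | zero =>
    intro a b hab
    have : a = b := by ext; omega
    subst this; simp
  | succ k IH =>
    intro a b hab
    have hb1 : (b:ℕ) - 1 < n := by have := b.isLt; omega
    have hmid := IH a ⟨(b:ℕ) - 1, hb1⟩ (by simp; omega)
    have hlt : (⟨(b:ℕ) - 1, hb1⟩ : Fin n) < b := by
      rw [Fin.lt_def]; simp; omega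
    have := hf hlt
    push_cast
    omega

lemma pinIJ {g : Zmn n n} (I J : Fin n → Idx n n) (hIJ : pairFamily g n I J) :
    (∀ s : Fin n, I s = emI s) ∧ (∀ s : Fin n, J s = epI s.rev) := by
  obtain ⟨hI, hJ, hIneg, hJpos, _⟩ := hIJ
  constructor
  · intro s
    have hs := s.isLt
    have h0 : 0 < n := by omega
    have hlow := fin_gap _ hI (s:ℕ) ⟨0, h0⟩ s (by simp)
    have hup := fin_gap _ hI (n - 1 - (s:ℕ)) s ⟨n-1, by omega⟩ (by simp; omega)
    have hb0 := (I ⟨0, h0⟩).2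
    have hbl := (I ⟨n-1, by omega⟩).2
    have hbs := (I s).2
    simp only [IdxSet, Finset.mem_union, Finset.mem_Icc] at hb0 hbl hbs
    have hn0 := hIneg ⟨0, h0⟩
    have hnl := hIneg ⟨n-1, by omega⟩
    have hns := hIneg s
    apply Subtype.ext
    simp only [coe_em]
    push_cast at hlow hup
    omega
  · intro s
    have hs := s.isLt
    have h0 : 0 < n := by omega
    have hJ' : StrictMono (fun t : Fin n => -((J t : Idx n n) : ℤ)) := by
      intro a b hab
      simp only [neg_lt_neg_iff]
      exact hJ hab
    have hlow := fin_gap _ hJ' (s:ℕ) ⟨0, h0⟩ s (by simp)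
    have hup := fin_gap _ hJ' (n - 1 - (s:ℕ)) s ⟨n-1, by omega⟩ (by simp; omega)
    have hb0 := (J ⟨0, h0⟩).2
    have hbl := (J ⟨n-1, by omega⟩).2
    have hbs := (J s).2
    simp only [IdxSet, Finset.mem_union, Finset.mem_Icc] at hb0 hbl hbs
    have hn0 := hJpos ⟨0, h0⟩
    have hnl := hJpos ⟨n-1, by omega⟩
    have hns := hJpos s
    apply Subtype.ext
    simp only [coe_ep, Fin.val_rev]
    push_cast at hlow hup
    omega

/-- Rop does not move other positions -/
lemma Rop_other (i j p : Idx n n) (hpi : p ≠ i) (hpj : p ≠ j) (h0 : Zmn n n) :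
    Rop n n i j h0 p = h0 p := by
  rw [Rop]
  simp only [Pi.add_apply, Pi.smul_apply, Pi.sub_apply, dvec, if_neg hpi, if_neg hpj]
  simp

lemma Rop_iter_other (i j p : Idx n n) (hpi : p ≠ i) (hpj : p ≠ j) (h0 : Zmn n n) (k : ℕ) :
    (Rop n n i j)^[k] h0 p = h0 p := by
  induction k with
  | zero => rfl
  | succ k IH => rw [Function.iterate_succ_apply', Rop_other i j p hpi hpj]; exact IH

lemma fold_inv {α : Type*} (ops : Fin n → α → α) (P : ℕ → α → Prop)
    (hstep : ∀ s (hs : s < n), ∀ h : α, P s h → P (s+1) (ops ⟨s, hs⟩ h)) :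
    ∀ k s, n - s = k → s ≤ n → ∀ h : α, P s h →
      P n ((List.drop s (List.finRange n)).foldl (fun g u => ops u g) h) := by
  intro k
  induction k with
  | zero =>
    intro s hk hs h hP
    have : s = n := by omega
    subst this
    rw [List.drop_eq_nil_of_le (by simp)]
    exact hP
  | succ k IH =>
    intro s hk hs h hP
    have hsn : s < n := by omega
    have hlen : s < (List.finRange n).length := by simpa using hsn
    have hdrop : List.drop s (List.finRange n)
        = (List.finRange n)[s] :: List.drop (s+1) (List.finRange n) :=
      List.drop_eq_getElem_cons hlen
    have hget : (List.finRange n)[s] = (⟨s, hsn⟩ : Fin n) := by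
      simp [List.getElem_finRange, Fin.cast]
    rw [hdrop, hget, List.foldl_cons]
    exact IH (s+1) (by omega) (by omega) _ (hstep s hsn h hP)

end S17g
section S17h
open Finset
variable {n : ℕ}

def linkV (θ : Fin n → ℕ) (s : ℕ) (v : ℤ) : Prop :=
  ∀ u : Fin n, (u:ℕ) + 1 = s → (θ u = 2 → v = 2*(u:ℤ)+2) ∧ (θ u = 0 → v ≤ 2*(u:ℤ))

def SInv (θ : Fin n → ℕ) (s : ℕ) (h : Zmn n n) : Prop :=
  ((∀ u : Fin n, (u:ℕ) < s → θ u = 0 ∨ θ u = 2) → ∃ v, Good s v h ∧ linkV θ s v) ∧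
  ((∃ u : Fin n, (u:ℕ) < s ∧ ¬(θ u = 0 ∨ θ u = 2)) →
    ∃ p : Fin n, n ≤ (p:ℕ) + s ∧ ((h (epI p)) % 2 = 1 ∨ h (epI p) < 0))

lemma inv_step (θ : Fin n → ℕ) (s : ℕ) (hs : s < n) (h : Zmn n n) (hInv : SInv θ s h) :
    SInv θ (s+1) ((Rop n n (emI ⟨s, hs⟩) (epI (Fin.rev ⟨s, hs⟩)))^[θ ⟨s, hs⟩] h) := by
  classical
  set t : Fin n := Fin.rev ⟨s, hs⟩ with htdef
  have hts : (t:ℕ) = n - 1 - s := by rw [htdef, Fin.val_rev]; simp; omega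
  have hact : (t:ℕ) + s + 1 = n := by omega
  have hrev : (⟨s, hs⟩ : Fin n) = t.rev := by rw [htdef, Fin.rev_rev]
  have htrv : ((t.rev : Fin n) : ℕ) = s := by rw [← hrev]
  have htrs : θ t.rev = θ ⟨s, hs⟩ := by rw [← hrev]
  rw [hrev]
  by_cases hpre : ∀ u : Fin n, (u:ℕ) < s → θ u = 0 ∨ θ u = 2
  · obtain ⟨v, hGood, hlink⟩ := hInv.1 hpre
    obtain ⟨hval, hX⟩ := (hGood.toX hs).iter t hact (θ t.rev)
    constructor
    · intro hpre1
      have hθs : θ t.rev = 0 ∨ θ t.rev = 2 := hpre1 t.rev (by omega)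
      rcases hθs with h0 | h2
      · refine ⟨v, ?_, ?_⟩
        · rw [h0, Function.iterate_zero_apply]
          exact hGood.succ0 hs
        · intro u hu
          have hu' : u = t.rev := by ext; omega
          subst hu'
          have := hGood.hvs
          exact ⟨fun hc => by omega, fun _ => by omega⟩
      · refine ⟨2*(s:ℤ)+2, ?_, ?_⟩
        · rw [h2] at hval ⊢
          rw [hval, trajV_two]
          exact hGood.succ2 hs t hact
        · intro u hu
          have hu' : u = t.rev := by ext; omega
          subst hu'
          refine ⟨fun _ => by push_cast; omega, fun hc => by omega⟩
    · rintro ⟨u, hu1, hu2⟩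
      have hus : (u:ℕ) = s := by
        rcases (by omega : (u:ℕ) < s ∨ (u:ℕ) = s) with h1 | h1
        · exact absurd (hpre u h1) hu2
        · exact h1
      have hut : u = t.rev := by ext; omega
      subst hut
      refine ⟨t, by omega, ?_⟩
      have hvv : ((Rop n n (emI t.rev) (epI t))^[θ t.rev] h) (epI t) = trajV s v (θ t.rev) := by
        rw [hval, updP_ep]
      rw [hvv]
      have hvE := hGood.hvE; have hv0 := hGood.hv0; have hvs := hGood.hvs
      rcases (by omega : θ t.rev = 1 ∨ θ t.rev = 3 ∨ 4 ≤ θ t.rev) with h1 | h1 | h1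
      · left; exact trajV_odd hvE hvs (Or.inl h1)
      · left; exact trajV_odd hvE hvs (Or.inr h1)
      · right; have := trajV_neg hvE hv0 hvs _ h1; omega
  · push_neg at hpre
    obtain ⟨u0, hu01, hu02⟩ := hpre
    obtain ⟨p, hp1, hp2⟩ := hInv.2 ⟨u0, by omega, by tauto⟩
    have hpt : epI (n:=n) p ≠ epI t := fun hc => by
      have := ep_inj hc
      subst this
      omega
    have hpm : epI (n:=n) p ≠ emI t.rev := fun hc => (em_ne_ep t.rev p hc.symm).elim
    constructor
    · intro hpre1
      exact absurd (hpre1 u0 (by omega)) (by tauto)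
    · intro _
      refine ⟨p, by omega, ?_⟩
      rw [Rop_iter_other _ _ _ hpm hpt]
      exact hp2

lemma inv_start (θ : Fin n → ℕ) (g : Zmn n n)
    (hgpos : ∀ t : Fin n, g (epI t) = 2*((n:ℤ) - (t:ℕ)))
    (hgsym : ∀ t : Fin n, g (emI t.rev) = g (epI t)) : SInv θ 0 g := by
  constructor
  · intro _
    exact ⟨0, good_start g hgpos hgsym, fun u hu => by omega⟩
  · rintro ⟨u, hu, _⟩
    omega

lemma inv_final (θ : Fin n → ℕ) (g : Zmn n n) (h0 : SInv θ 0 g) :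
    SInv θ n (applyFwd (fun (s : Fin n) => (Rop n n (emI s) (epI s.rev))^[θ s]) g) := by
  have := fold_inv (fun (s : Fin n) (h : Zmn n n) => (Rop n n (emI s) (epI s.rev))^[θ s] h)
    (SInv θ) (fun s hs h hP => inv_step θ s hs h hP) n 0 (by omega) (by omega) g h0
  rw [List.drop_zero] at this
  exact this

end S17h
section S17i
open Finset
variable {n : ℕ}

lemma image_rev (F : Fin n → ℤ) :
    Finset.image (fun t : Fin n => F t.rev) Finset.univ = Finset.image F Finset.univ := by
  ext x
  simp only [Finset.mem_image, Finset.mem_univ, true_and]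
  constructor
  · rintro ⟨t, rfl⟩; exact ⟨t.rev, rfl⟩
  · rintro ⟨t, rfl⟩; exact ⟨t.rev, by rw [Fin.rev_rev]⟩

lemma Good.posInjN {v : ℤ} {h : Zmn n n} (hg : Good n v h) :
    ∀ t u : Fin n, h (epI t) = h (epI u) → t = u :=
  fun t u heq => hg.pinj t u (by omega) (by omega) heq

lemma final_eq (f h : Zmn n n)
    (hfdef : ∀ i : Idx n n, f i = if (i:ℤ) < 0 then 2 * ((n:ℤ) + (i:ℤ)) else 2 * ((n:ℤ) - (i:ℤ)))
    (hg : Good n (2*(n:ℤ)) h) : domConj h = f := by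
  classical
  have hfep : ∀ t : Fin n, f (epI t) = 2*((n:ℤ) - 1 - (t:ℕ)) := by
    intro t
    rw [hfdef, if_neg (not_lt.mpr (ep_pos t).le)]
    simp only [coe_ep]; ring
  have hfem : ∀ t : Fin n, f (emI t) = 2*(t:ℕ) := by
    intro t
    rw [hfdef, if_pos (em_neg t)]
    simp only [coe_em]; ring
  have hc : conjDom h := conjDom_of_sym hg.sym hg.posInjN
  rw [domConj, dif_pos hc]
  obtain ⟨hbp, hdom⟩ := hc.choose_spec
  set e := hc.choose with he
  have hσex : ∀ t : Fin n, ∃ u : Fin n, e (epI t) = epI u := by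
    intro t
    rcases idx_cases (e (epI t)) with ⟨u, hu⟩ | ⟨u, hu⟩
    · exfalso
      have h2 := (hbp (epI t)).mp (ep_pos t)
      rw [hu] at h2
      exact absurd h2 (not_lt.mpr (em_neg u).le)
    · exact ⟨u, hu⟩
  choose σ hσ using hσex
  have hσinj : Function.Injective σ := by
    intro a b hab
    exact ep_inj (e.injective (by rw [hσ a, hσ b, hab]))
  have hσsurj : Function.Surjective σ := Finite.surjective_of_injective hσinj
  have hσ'ex : ∀ t : Fin n, ∃ u : Fin n, e (emI t) = emI u := by
    intro t
    rcases idx_cases (e (emI t)) with ⟨u, hu⟩ | ⟨u, hu⟩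
    · exact ⟨u, hu⟩
    · exfalso
      have h2 : ¬ (0 < ((emI (n:=n) t : Idx n n):ℤ)) := not_lt.mpr (em_neg t).le
      rw [hbp (emI t), hu] at h2
      exact h2 (ep_pos u)
  choose σ' hσ'' using hσ'ex
  have hσ'inj : Function.Injective σ' := by
    intro a b hab
    exact em_inj (e.injective (by rw [hσ'' a, hσ'' b, hab]))
  have hσ'surj : Function.Surjective σ' := Finite.surjective_of_injective hσ'inj
  have himP : Finset.image (fun t => h (e (epI t))) Finset.univ
      = Finset.image (fun t => h (epI t)) Finset.univ := by
    ext x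
    simp only [Finset.mem_image, Finset.mem_univ, true_and]
    constructor
    · rintro ⟨a, rfl⟩; exact ⟨σ a, by rw [hσ a]⟩
    · rintro ⟨u, rfl⟩
      obtain ⟨a, rfl⟩ := hσsurj u
      exact ⟨a, by rw [hσ a]⟩
  have himM : Finset.image (fun t => h (e (emI t))) Finset.univ
      = Finset.image (fun t => h (emI t)) Finset.univ := by
    ext x
    simp only [Finset.mem_image, Finset.mem_univ, true_and]
    constructor
    · rintro ⟨a, rfl⟩; exact ⟨σ' a, by rw [hσ'' a]⟩
    · rintro ⟨u, rfl⟩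
      obtain ⟨a, rfl⟩ := hσ'surj u
      exact ⟨a, by rw [hσ'' a]⟩
  have hsymIm : Finset.image (fun t : Fin n => h (emI t)) Finset.univ
      = Finset.image (fun t => h (epI t)) Finset.univ := by
    have hfn : (fun t : Fin n => h (emI t)) = fun t => h (epI t.rev) := by
      funext t
      have := hg.sym t.rev
      rwa [Fin.rev_rev] at this
    rw [hfn, image_rev (fun t : Fin n => h (epI t))]
  have hHvals : Finset.image (fun t : Fin n => h (epI t)) Finset.univ
      = Finset.image (fun t => f (epI t)) Finset.univ := by
    ext x
    simp only [Finset.mem_image, Finset.mem_univ, true_and]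
    constructor
    · rintro ⟨u, rfl⟩
      obtain ⟨e1, e2, e3, e4⟩ := hg.pE u (by omega)
      have hul := u.isLt
      refine ⟨⟨n - 1 - ((h (epI u)).toNat / 2), by omega⟩, ?_⟩
      rw [hfep]
      simp only []
      push_cast
      omega
    · rintro ⟨u, rfl⟩
      have hmem : memE n (2*(n:ℤ)) (f (epI u)) := by
        rw [hfep]
        have := u.isLt
        exact ⟨by omega, by omega, by omega, by omega⟩
      obtain ⟨w, _, hw⟩ := hg.psurj _ hmem
      exact ⟨w, hw⟩
  have hfPM : Finset.image (fun t : Fin n => f (emI t)) Finset.univ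
      = Finset.image (fun t => f (epI t)) Finset.univ := by
    ext x
    simp only [Finset.mem_image, Finset.mem_univ, true_and]
    constructor
    · rintro ⟨u, rfl⟩
      refine ⟨u.rev, ?_⟩
      rw [hfep, hfem, Fin.val_rev]
      have := u.isLt
      push_cast
      omega
    · rintro ⟨u, rfl⟩
      refine ⟨u.rev, ?_⟩
      rw [hfep, hfem, Fin.val_rev]
      have := u.isLt
      push_cast
      omega
  have hPos : ∀ w : Fin n, h (e (epI w)) = f (epI w) := by
    have hm1 : StrictMono (fun t : Fin n => h (e (epI t.rev))) := by
      intro a b hab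
      have hrl : b.rev < a.rev := Fin.rev_lt_rev.mpr hab
      have hrl' : ((b.rev : Fin n):ℕ) < ((a.rev : Fin n):ℕ) := hrl
      have hlt : ((epI (n:=n) b.rev : Idx n n):ℤ) < ((epI (n:=n) a.rev : Idx n n):ℤ) := by
        simp only [coe_ep]; omega
      exact (hdom _ _ hlt).2 (ep_pos b.rev)
    have hm2 : StrictMono (fun t : Fin n => f (epI t.rev)) := by
      intro a b hab
      have h1 : (a:ℕ) < (b:ℕ) := hab
      have := a.isLt; have := b.isLt
      simp only [hfep, Fin.val_rev]
      push_cast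
      omega
    have him : Finset.image (fun t : Fin n => h (e (epI t.rev))) Finset.univ
        = Finset.image (fun t : Fin n => f (epI t.rev)) Finset.univ := by
      rw [image_rev (fun t : Fin n => h (e (epI t))), image_rev (fun t : Fin n => f (epI t)), himP, hHvals]
    have heqf := strictMono_unique _ _ hm1 hm2 him
    intro w
    have h2 := congrFun heqf w.rev
    simp only [Fin.rev_rev] at h2
    exact h2
  have hNeg : ∀ w : Fin n, h (e (emI w)) = f (emI w) := by
    have hm1 : StrictMono (fun t : Fin n => h (e (emI t))) := by
      intro a b hab
      have h1 : (a:ℕ) < (b:ℕ) := hab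
      have hlt : ((emI (n:=n) a : Idx n n):ℤ) < ((emI (n:=n) b : Idx n n):ℤ) := by
        simp only [coe_em]; omega
      exact (hdom _ _ hlt).1 (em_neg b)
    have hm2 : StrictMono (fun t : Fin n => f (emI t)) := by
      intro a b hab
      have h1 : (a:ℕ) < (b:ℕ) := hab
      simp only [hfem]
      push_cast
      omega
    have him : Finset.image (fun t : Fin n => h (e (emI t))) Finset.univ
        = Finset.image (fun t => f (emI t)) Finset.univ := by
      rw [himM, hsymIm, hHvals, ← hfPM]
    exact congrFun (strictMono_unique _ _ hm1 hm2 him)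
  funext i
  rcases idx_cases i with ⟨w, rfl⟩ | ⟨w, rfl⟩
  · exact hNeg w
  · exact hPos w

lemma domConj_val (h : Zmn n n) (p : Idx n n) : ∃ q : Idx n n, domConj h q = h p := by
  classical
  rw [domConj]
  by_cases hc : conjDom h
  · rw [dif_pos hc]
    exact ⟨hc.choose.symm p, by rw [Equiv.apply_symm_apply]⟩
  · rw [dif_neg hc]
    exact ⟨p, rfl⟩

lemma f_bounds (f : Zmn n n)
    (hfdef : ∀ i : Idx n n, f i = if (i:ℤ) < 0 then 2 * ((n:ℤ) + (i:ℤ)) else 2 * ((n:ℤ) - (i:ℤ)))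
    (q : Idx n n) : (f q) % 2 = 0 ∧ 0 ≤ f q ∧ f q ≤ 2*(n:ℤ) - 2 := by
  have hq := q.2
  simp only [IdxSet, Finset.mem_union, Finset.mem_Icc] at hq
  rw [hfdef]
  split_ifs with h1 <;> omega

end S17i
section S17j
open Finset
variable {n : ℕ}

lemma char_iff (hn : 1 ≤ n) (f g : Zmn n n)
    (hfdef : ∀ i : Idx n n, f i = if (i:ℤ) < 0 then 2 * ((n:ℤ) + (i:ℤ)) else 2 * ((n:ℤ) - (i:ℤ)))
    (hgdef : ∀ i : Idx n n, g i = f i + 2)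
    (I J : Fin n → Idx n n) (hIJ : pairFamily g n I J) (θ : Fin n → ℕ) :
    Rtheta' I J θ g = f ↔ ∀ u : Fin n, (θ u = 0 ∨ θ u = 2) ∧ ((u:ℕ) + 1 = n → θ u = 2) := by
  classical
  obtain ⟨hIe, hJe⟩ := pinIJ I J hIJ
  have hgep : ∀ t : Fin n, g (epI t) = 2*((n:ℤ) - (t:ℕ)) := by
    intro t
    rw [hgdef, hfdef, if_neg (not_lt.mpr (ep_pos t).le)]
    simp only [coe_ep]; ring
  have hgsym : ∀ t : Fin n, g (emI t.rev) = g (epI t) := by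
    intro t
    rw [hgdef, hgdef, hfdef, hfdef, if_pos (em_neg t.rev), if_neg (not_lt.mpr (ep_pos t).le)]
    simp only [coe_em, coe_ep, Fin.val_rev]
    have := t.isLt
    push_cast
    omega
  have hops : (fun (s : Fin n) => (Rop n n (I s) (J s))^[θ s])
      = (fun (s : Fin n) => (Rop n n (emI s) (epI s.rev))^[θ s]) := by
    funext s
    rw [hIe s, hJe s]
  have hRW : Rtheta' I J θ g
      = domConj (applyFwd (fun (s : Fin n) => (Rop n n (emI s) (epI s.rev))^[θ s]) g) := by
    unfold Rtheta'
    rw [hops]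
  have hfin := inv_final θ g (inv_start θ g hgep hgsym)
  rw [hRW]
  set F := applyFwd (fun (s : Fin n) => (Rop n n (emI s) (epI s.rev))^[θ s]) g with hF
  constructor
  · intro heq
    by_contra hbad
    by_cases hall : ∀ u : Fin n, θ u = 0 ∨ θ u = 2
    · by_cases hlast : ∀ u : Fin n, (u:ℕ) + 1 = n → θ u = 2
      · exact hbad (fun u => ⟨hall u, hlast u⟩)
      · push_neg at hlast
        obtain ⟨u, hu1, hu2⟩ := hlast
        have hθu0 : θ u = 0 := by
          rcases hall u with h | h
          · exact h
          · exact absurd h hu2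
        obtain ⟨v, hGoodn, hlink⟩ := hfin.1 (fun w _ => hall w)
        have hvle : v ≤ 2*(u:ℤ) := (hlink u hu1).2 hθu0
        have hun : ((u:ℕ):ℤ) = (n:ℤ) - 1 := by
          push_cast
          omega
        have hmem : memE n v (2*(n:ℤ)) := ⟨by omega, by omega, by omega, by omega⟩
        obtain ⟨p, _, hp⟩ := hGoodn.psurj _ hmem
        obtain ⟨q, hq⟩ := domConj_val F (epI p)
        rw [heq] at hq
        have hb := f_bounds f hfdef q
        rw [hq, hp] at hb
        omega
    · push_neg at hall
      obtain ⟨u, hu⟩ := hall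
      obtain ⟨p, _, hp⟩ := hfin.2 ⟨u, u.isLt, by tauto⟩
      obtain ⟨q, hq⟩ := domConj_val F (epI p)
      rw [heq] at hq
      have hb := f_bounds f hfdef q
      rw [hq] at hb
      rcases hp with h1 | h1 <;> omega
  · intro hchar
    obtain ⟨v, hGoodn, hlink⟩ := hfin.1 (fun w _ => (hchar w).1)
    have hlt : n - 1 < n := by omega
    have hun : (((⟨n-1, hlt⟩ : Fin n) : ℕ)) + 1 = n := by simp; omega
    have hθ2 : θ ⟨n-1, hlt⟩ = 2 := (hchar _).2 hun
    have hveq := (hlink ⟨n-1, hlt⟩ hun).1 hθ2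
    have hv : v = 2*(n:ℤ) := by
      rw [hveq]
      have : (((⟨n-1, hlt⟩ : Fin n) : ℕ):ℤ) = (n:ℤ) - 1 := by
        push_cast [hun]
        omega
      omega
    exact final_eq f F hfdef (hv ▸ hGoodn)

lemma wtF_zero (F : Zmn n n) (hsym : ∀ t : Fin n, F (emI t.rev) = F (epI t)) :
    wtF F = 0 := by
  unfold wtF
  rw [← Equiv.sum_comp sumE (fun i => isgn i • Finsupp.single (F i) (1:ℤ)), Fintype.sum_sum_type]
  have h1 : ∀ t : Fin n, isgn (emI (n:=n) t : Idx n n) = -1 := fun t => by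
    rw [isgn, if_neg (not_lt.mpr (em_neg t).le)]
  have h2 : ∀ t : Fin n, isgn (epI (n:=n) t : Idx n n) = 1 := fun t => by
    rw [isgn, if_pos (ep_pos t)]
  have hsym' : ∀ t : Fin n, F (emI t) = F (epI t.rev) := by
    intro t
    have := hsym t.rev
    rwa [Fin.rev_rev] at this
  have hL : (∑ t : Fin n, isgn (sumE (Sum.inl t) : Idx n n) • Finsupp.single (F (sumE (Sum.inl t))) (1:ℤ))
      = - ∑ t : Fin n, Finsupp.single (F (epI t)) (1:ℤ) := by
    have : ∀ t : Fin n, isgn (sumE (Sum.inl t) : Idx n n) • Finsupp.single (F (sumE (Sum.inl t))) (1:ℤ)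
        = - Finsupp.single (F (epI t.rev)) (1:ℤ) := by
      intro t
      rw [sumE_inl, h1, hsym']
      simp
    rw [Finset.sum_congr rfl (fun t _ => this t), Finset.sum_neg_distrib]
    congr 1
    exact Fintype.sum_equiv Fin.revPerm _ _ (fun t => rfl)
  have hR : (∑ t : Fin n, isgn (sumE (Sum.inr t) : Idx n n) • Finsupp.single (F (sumE (Sum.inr t))) (1:ℤ))
      = ∑ t : Fin n, Finsupp.single (F (epI t)) (1:ℤ) := by
    apply Finset.sum_congr rfl
    intro t _
    rw [sumE_inr, h2]
    simp
  rw [hL, hR]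
  simp

lemma atyp_of_sym (F : Zmn n n) (hsym : ∀ t : Fin n, F (emI t.rev) = F (epI t)) :
    atyp F = n := by
  unfold atyp
  rw [wtF_zero F hsym]
  simp
  omega

end S17j

/-- for `f = (0,2,...,2n−2 | 2n−2,...,2,0)` and `g = f + 2`,
`∑_{θ : R'_θ(g) = f} q^{|θ|} = q²(1+q²)^{n−1}`. -/
theorem sum_over_tuples {n : ℕ} (hn : 1 ≤ n) (f g : Zmn n n)
    (hfdef : ∀ i : Idx n n, f i = if (i:ℤ) < 0 then 2 * ((n:ℤ) + (i:ℤ)) else 2 * ((n:ℤ) - (i:ℤ)))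
    (hgdef : ∀ i : Idx n n, g i = f i + 2)
    (I J : Fin n → Idx n n) (hIJ : pairFamily g n I J) :
    dominantZ f ∧ dominantZ g ∧ atyp f = n ∧ atyp g = n ∧
    {θ : Fin n → ℕ | Rtheta' I J θ g = f}.Finite ∧
    ∀ T : Finset (Fin n → ℕ), (∀ θ : Fin n → ℕ, θ ∈ T ↔ Rtheta' I J θ g = f) →
      ∑ θ ∈ T, (Polynomial.X : Polynomial ℤ) ^ (∑ s : Fin n, θ s) =
        Polynomial.X ^ 2 * (1 + Polynomial.X ^ 2) ^ (n - 1) := by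
  classical
  have hbnd : ∀ i : Idx n n, (-(n:ℤ) ≤ (i:ℤ) ∧ (i:ℤ) ≤ -1) ∨ (1 ≤ (i:ℤ) ∧ (i:ℤ) ≤ n) := by
    intro i
    have := i.2
    simp only [IdxSet, Finset.mem_union, Finset.mem_Icc] at this
    tauto
  have hdomf : dominantZ f := by
    intro i j hij
    constructor
    · intro hj0
      have hi0 : (i:ℤ) < 0 := by omega
      rw [hfdef i, hfdef j, if_pos hi0, if_pos hj0]
      omega
    · intro hi0
      have hj0 : 0 < (j:ℤ) := by omega
      rw [hfdef i, hfdef j, if_neg (by omega), if_neg (by omega)]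
      omega
  have hdomg : dominantZ g := by
    intro i j hij
    rw [hgdef i, hgdef j]
    obtain ⟨h1, h2⟩ := hdomf i j hij
    exact ⟨fun hj => by have := h1 hj; omega, fun hi => by have := h2 hi; omega⟩
  have hsymf : ∀ t : Fin n, f (emI t.rev) = f (epI t) := by
    intro t
    rw [hfdef, hfdef, if_pos (em_neg t.rev), if_neg (not_lt.mpr (ep_pos t).le)]
    simp only [coe_em, coe_ep, Fin.val_rev]
    have := t.isLt
    push_cast
    omega
  have hsymg : ∀ t : Fin n, g (emI t.rev) = g (epI t) := by
    intro t
    rw [hgdef, hgdef, hsymf t]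
  have hchar := char_iff hn f g hfdef hgdef I J hIJ
  refine ⟨hdomf, hdomg, atyp_of_sym f hsymf, atyp_of_sym g hsymg, ?_, ?_⟩
  · apply Set.Finite.subset
      (Finset.finite_toSet (Fintype.piFinset (fun _ : Fin n => ({0,2} : Finset ℕ))))
    intro θ hθ
    simp only [Set.mem_setOf_eq] at hθ
    rw [hchar θ] at hθ
    simp only [Finset.mem_coe, Fintype.mem_piFinset]
    intro u
    rcases (hθ u).1 with h | h <;> simp [h]
  · intro T hT
    have hlt : n - 1 < n := by omega
    have hun : (((⟨n-1, hlt⟩ : Fin n) : ℕ)) + 1 = n := by simp; omega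
    have hTeq : T = Fintype.piFinset
        (fun u : Fin n => if (u:ℕ)+1 = n then ({2} : Finset ℕ) else {0,2}) := by
      ext θ
      rw [hT θ, hchar θ, Fintype.mem_piFinset]
      constructor
      · intro hc u
        by_cases h1 : (u:ℕ)+1 = n
        · rw [if_pos h1]
          simp [(hc u).2 h1]
        · rw [if_neg h1]
          rcases (hc u).1 with h | h <;> simp [h]
      · intro hc u
        have := hc u
        by_cases h1 : (u:ℕ)+1 = n
        · rw [if_pos h1] at this
          simp at this
          exact ⟨Or.inr this, fun _ => this⟩
        · rw [if_neg h1] at this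
          simp at this
          exact ⟨this, fun hcon => absurd hcon h1⟩
    rw [hTeq]
    have hsp : ∀ θ : Fin n → ℕ, (Polynomial.X : Polynomial ℤ) ^ (∑ s : Fin n, θ s)
        = ∏ s : Fin n, (Polynomial.X : Polynomial ℤ) ^ (θ s) :=
      fun θ => (Finset.prod_pow_eq_pow_sum _ _ _).symm
    rw [Finset.sum_congr rfl (fun θ _ => hsp θ), ← Finset.prod_univ_sum]
    rw [← Finset.mul_prod_erase Finset.univ _ (Finset.mem_univ (⟨n-1, hlt⟩ : Fin n))]
    have hterm : (∑ j ∈ (if (((⟨n-1, hlt⟩ : Fin n):ℕ))+1 = n then ({2}:Finset ℕ) else {0,2}),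
        (Polynomial.X : Polynomial ℤ)^j) = Polynomial.X^2 := by
      rw [if_pos hun, Finset.sum_singleton]
    have hconst : ∀ u ∈ Finset.univ.erase (⟨n-1, hlt⟩ : Fin n),
        (∑ j ∈ (if ((u:ℕ))+1 = n then ({2}:Finset ℕ) else {0,2}),
          (Polynomial.X : Polynomial ℤ)^j) = 1 + Polynomial.X^2 := by
      intro u hu
      have hne : (u:ℕ)+1 ≠ n := by
        intro hc
        exact (Finset.mem_erase.mp hu).1 (by ext; simp; omega)
      rw [if_neg hne, Finset.sum_pair (by norm_num : (0:ℕ) ≠ 2)]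
      simp
    rw [Finset.prod_congr rfl hconst, Finset.prod_const, hterm]
    congr 1
    rw [Finset.card_erase_of_mem (Finset.mem_univ _), Finset.card_univ, Fintype.card_fin]
end
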